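/- arXiv:1501.03267 — 5 statements merged into one kernel-verified Lean document; each statement's English description precedes it below -/
import Mathlib

section
/- Let X and Y be separable Banach spaces and Z a Banach space continuously embedded in L(X,Y). If the closed unit ball of Z is closed in L(X,Y) with respect to the strong operator topology, then Z has the strong convex compactness property: for any finite measure space (Ω,Σ,μ) and any bounded strongly measurable f : Ω → Z, the operator T defined by Tx = ∫_Ω f(ω)x dμ(ω) belongs to Z with ‖T‖_Z ≤ the upper integral of ‖f(ω)‖_Z dμ(ω). -/
/-!
For finitely many vectors `v₁, …, v_N`, the points `((J (f ω) vᵢ)ᵢ, g ω)` lie in the convex cone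
of pairs `((J z vᵢ)ᵢ, r)` with `‖z‖ ≤ r`, so their integral `((T vᵢ)ᵢ, ∫ g)` lies in its closure:
some `z` with `‖z‖ ≤ ∫ g + ε` has `J z` close to `T` at the `vᵢ`. Running this along a dense
sequence gives a bounded sequence `J zₙ` converging strongly to `T`, and the sequential
closedness of the ball puts `T` in `J(Z)` with the same bound.
-/

open Filter Topology MeasureTheory
open scoped ENNReal NNReal

section Cone

variable {Ω E : Type*} [MeasurableSpace Ω] {μ : Measure Ω}
  [NormedAddCommGroup E] [NormedSpace ℝ E] [CompleteSpace E]

theorem PointedCone.integral_mem_closure [IsFiniteMeasure μ] (K : PointedCone ℝ E) {f : Ω → E}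
    (hfK : ∀ᵐ ω ∂μ, f ω ∈ K) (hf : Integrable f μ) : ∫ ω, f ω ∂μ ∈ closure (K : Set E) := by
  rcases eq_zero_or_neZero μ with rfl | _
  · simpa using subset_closure K.zero_mem
  rw [← measure_smul_average]
  exact K.closure.smul_mem measureReal_nonneg <|
    K.convex.closure.average_mem isClosed_closure (hfK.mono fun _ h => subset_closure h) hf

variable {Z : Type*} [NormedAddCommGroup Z] [NormedSpace ℝ Z]

def LinearMap.normEpigraphImage (Φ : Z →ₗ[ℝ] E) : PointedCone ℝ (E × ℝ) where
  carrier := {p | ∃ z, Φ z = p.1 ∧ ‖z‖ ≤ p.2}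
  zero_mem' := ⟨0, by simp⟩
  add_mem' := by
    rintro ⟨_, _⟩ ⟨_, _⟩ ⟨z, rfl, hz⟩ ⟨w, rfl, hw⟩
    exact ⟨z + w, map_add Φ z w, (norm_add_le z w).trans (add_le_add hz hw)⟩
  smul_mem' := by
    rintro ⟨c, hc⟩ ⟨_, _⟩ ⟨z, rfl, hz⟩
    refine ⟨c • z, map_smul Φ c z, ?_⟩
    simp only [Prod.smul_snd, Nonneg.mk_smul, smul_eq_mul, norm_smul, Real.norm_of_nonneg hc]
    exact mul_le_mul_of_nonneg_left hz hc

theorem LinearMap.exists_approx_integral_of_norm_le [IsFiniteMeasure μ] (Φ : Z →ₗ[ℝ] E)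
    {F : Ω → Z} {G : Ω → ℝ} (hFG : ∀ᵐ ω ∂μ, ‖F ω‖ ≤ G ω) (hΦF : Integrable (fun ω => Φ (F ω)) μ)
    (hG : Integrable G μ) {ε : ℝ} (hε : 0 < ε) :
    ∃ z, ‖z‖ < ∫ ω, G ω ∂μ + ε ∧ ‖Φ z - ∫ ω, Φ (F ω) ∂μ‖ < ε := by
  have hmem := Φ.normEpigraphImage.integral_mem_closure
    (hFG.mono fun ω h => ⟨F ω, rfl, h⟩) (hΦF.prodMk hG)
  rw [integral_pair hΦF hG] at hmem
  obtain ⟨⟨_, r⟩, ⟨z, rfl, hz⟩, hdist⟩ := Metric.mem_closure_iff.mp hmem ε hε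
  rw [Prod.dist_eq, max_lt_iff, dist_comm, Real.dist_eq, abs_lt] at hdist
  exact ⟨z, by linarith [hdist.2.2], by simpa [dist_eq_norm] using hdist.1⟩

end Cone

theorem ContinuousLinearMap.tendsto_apply_of_denseRange {𝕜 X Y ι κ : Type*}
    [NontriviallyNormedField 𝕜] [NormedAddCommGroup X] [NormedSpace 𝕜 X]
    [NormedAddCommGroup Y] [NormedSpace 𝕜 Y] {l : Filter ι} {A : ι → X →L[𝕜] Y}
    {T : X →L[𝕜] Y} {C : ℝ} (hA : ∀ i, ‖A i‖ ≤ C) {v : κ → X} (hv : DenseRange v)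
    (hAv : ∀ k, Tendsto (fun i => A i (v k)) l (𝓝 (T (v k)))) (x : X) :
    Tendsto (fun i => A i x) l (𝓝 (T x)) := by
  have hequi : Equicontinuous fun i => ⇑(A i) :=
    ((NormedSpace.equicontinuous_TFAE A).out 5 1).mp (⟨C, hA⟩ : ∃ C, ∀ i, ‖A i‖ ≤ C)
  have hclosed := hequi.isClosed_setOfPred_tendsto (l := l) T.continuous
  exact hclosed.closure_subset_iff.mpr (Set.range_subset_iff.mpr hAv) (hv x)

section Embedding

variable {X Y Z : Type*} [NormedAddCommGroup X] [NormedSpace ℂ X]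
  [NormedAddCommGroup Y] [NormedSpace ℂ Y] [NormedAddCommGroup Z] [NormedSpace ℂ Z]
  (J : Z →ₗ[ℂ] (X →L[ℂ] Y))

def UnitBallIsSeqClosedSOT : Prop :=
  ∀ (z : ℕ → Z) (T : X →L[ℂ] Y), (∀ n, ‖z n‖ ≤ 1) →
    (∀ x : X, Tendsto (fun n => J (z n) x) atTop (𝓝 (T x))) → ∃ z₀ : Z, ‖z₀‖ ≤ 1 ∧ J z₀ = T

theorem UnitBallIsSeqClosedSOT.exists_norm_le_eq {J} (hball : UnitBallIsSeqClosedSOT J) {r : ℝ}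
    (hr : 0 < r) {z : ℕ → Z} (hz : ∀ n, ‖z n‖ ≤ r) {T : X →L[ℂ] Y}
    (hzT : ∀ x, Tendsto (fun n => J (z n) x) atTop (𝓝 (T x))) : ∃ z₀, J z₀ = T ∧ ‖z₀‖ ≤ r := by
  have hr' : (r : ℂ) ≠ 0 := by exact_mod_cast hr.ne'
  obtain ⟨z₀, hz₀, hJz₀⟩ := hball (fun n => (r⁻¹ : ℂ) • z n) ((r⁻¹ : ℂ) • T)
    (fun n => by
      rw [norm_smul, norm_inv, Complex.norm_of_nonneg hr.le, inv_mul_le_one₀ hr]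
      exact hz n)
    (fun x => by simpa using (hzT x).const_smul (r⁻¹ : ℂ))
  refine ⟨(r : ℂ) • z₀, by rw [map_smul, hJz₀, smul_smul, mul_inv_cancel₀ hr', one_smul], ?_⟩
  rw [norm_smul, Complex.norm_of_nonneg hr.le]
  exact mul_le_of_le_one_right hr.le hz₀

variable {Ω : Type*} [MeasurableSpace Ω] {μ : Measure Ω} [IsFiniteMeasure μ] [CompleteSpace Y]
  {f : Ω → Z} {T : X →L[ℂ] Y} {g : Ω → ℝ≥0∞}

theorem exists_norm_lt_forall_norm_apply_sub_lt
    (hf : ∀ x, Integrable (fun ω => J (f ω) x) μ) (hT : ∀ x, T x = ∫ ω, J (f ω) x ∂μ)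
    (hg : Measurable g) (hfg : ∀ ω, (‖f ω‖₊ : ℝ≥0∞) ≤ g ω) (hgfin : ∫⁻ ω, g ω ∂μ ≠ ∞)
    {ι : Type*} [Fintype ι] (v : ι → X) {ε : ℝ} (hε : 0 < ε) :
    ∃ z, ‖z‖ < (∫⁻ ω, g ω ∂μ).toReal + ε ∧ ∀ i, ‖J z (v i) - T (v i)‖ < ε := by
  let Φ : Z →ₗ[ℝ] (ι → Y) := (LinearMap.pi fun i =>
    (ContinuousLinearMap.apply ℂ Y (v i)).toLinearMap ∘ₗ J).restrictScalars ℝ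
  have hΦf : Integrable (fun ω => Φ (f ω)) μ := Integrable.of_eval fun i => hf (v i)
  have hΦT : ∫ ω, Φ (f ω) ∂μ = fun i => T (v i) :=
    funext fun i => (eval_integral (fun i => hf (v i)) i).trans (hT (v i)).symm
  have hg_lt_top : ∀ᵐ ω ∂μ, g ω < ∞ := ae_lt_top hg hgfin
  have hfG : ∀ᵐ ω ∂μ, ‖f ω‖ ≤ (g ω).toReal :=
    hg_lt_top.mono fun ω hω => by simpa using ENNReal.toReal_mono hω.ne (hfg ω)
  obtain ⟨z, hz, hzT⟩ := Φ.exists_approx_integral_of_norm_le hfG hΦf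
    (integrable_toReal_of_lintegral_ne_top hg.aemeasurable hgfin) hε
  rw [integral_toReal hg.aemeasurable hg_lt_top] at hz
  rw [hΦT] at hzT
  exact ⟨z, hz, fun i => (norm_le_pi_norm (Φ z - fun i => T (v i)) i).trans_lt hzT⟩

theorem exists_eq_norm_le_lintegral_add [TopologicalSpace.SeparableSpace X] {CJ : ℝ}
    (hCJ : ∀ z : Z, ‖J z‖ ≤ CJ * ‖z‖) (hball : UnitBallIsSeqClosedSOT J)
    (hf : ∀ x, Integrable (fun ω => J (f ω) x) μ) (hT : ∀ x, T x = ∫ ω, J (f ω) x ∂μ)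
    (hg : Measurable g) (hfg : ∀ ω, (‖f ω‖₊ : ℝ≥0∞) ≤ g ω) (hgfin : ∫⁻ ω, g ω ∂μ ≠ ∞)
    {ε : ℝ} (hε : 0 < ε) : ∃ z, J z = T ∧ ‖z‖ ≤ (∫⁻ ω, g ω ∂μ).toReal + ε := by
  set r := (∫⁻ ω, g ω ∂μ).toReal + ε
  obtain ⟨v, hv⟩ := TopologicalSpace.exists_dense_seq X
  have hzn : ∀ n : ℕ, ∃ z, ‖z‖ ≤ r ∧ ∀ k : Fin n, ‖J z (v k) - T (v k)‖ ≤ 1 / (n + 1) := by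
    intro n
    obtain ⟨z, hz, hzT⟩ := exists_norm_lt_forall_norm_apply_sub_lt J hf hT hg hfg hgfin
      (fun k : Fin n => v k) (lt_min hε (Nat.one_div_pos_of_nat (n := n)))
    exact ⟨z, by linarith [min_le_left ε (1 / (n + 1 : ℝ))],
      fun k => (hzT k).le.trans (min_le_right _ _)⟩
  choose z hz_norm hzT using hzn
  have hconv : ∀ k, Tendsto (fun n => J (z n) (v k)) atTop (𝓝 (T (v k))) := by
    intro k
    rw [tendsto_iff_norm_sub_tendsto_zero]
    refine squeeze_zero' (Eventually.of_forall fun _ => norm_nonneg _) ?_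
      tendsto_one_div_add_atTop_nhds_zero_nat
    filter_upwards [eventually_gt_atTop k] with n hn using hzT n ⟨k, hn⟩
  have hbound : ∀ n, ‖J (z n)‖ ≤ |CJ| * r := fun n =>
    (hCJ _).trans (mul_le_mul (le_abs_self _) (hz_norm n) (norm_nonneg _) (abs_nonneg _))
  exact hball.exists_norm_le_eq (by positivity) hz_norm
    (ContinuousLinearMap.tendsto_apply_of_denseRange hbound hv hconv)

end Embedding

theorem stmt_4_general {X Y Z : Type*}
    [NormedAddCommGroup X] [NormedSpace ℂ X]
    [TopologicalSpace.SeparableSpace X]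
    [NormedAddCommGroup Y] [NormedSpace ℂ Y] [CompleteSpace Y]
    [NormedAddCommGroup Z] [NormedSpace ℂ Z]
    (J : Z →ₗ[ℂ] (X →L[ℂ] Y)) (hJinj : Function.Injective J)
    (CJ : ℝ) (hCJ : ∀ z : Z, ‖J z‖ ≤ CJ * ‖z‖)
    (hball : ∀ (z : ℕ → Z) (T : X →L[ℂ] Y), (∀ n, ‖z n‖ ≤ 1) →
      (∀ v : X, Tendsto (fun n => J (z n) v) atTop (𝓝 (T v))) →
      ∃ z₀ : Z, ‖z₀‖ ≤ 1 ∧ J z₀ = T)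
    {Ω : Type*} [MeasurableSpace Ω] (μ : Measure Ω) [IsFiniteMeasure μ]
    (f : Ω → Z) (Cf : ℝ) (hCf : ∀ ω, ‖f ω‖ ≤ Cf)
    (hmeas : ∀ v : X, AEStronglyMeasurable (fun ω => J (f ω) v) μ)
    (T : X →L[ℂ] Y) (hT : ∀ v : X, T v = ∫ ω, J (f ω) v ∂μ) :
    ∃ z : Z, J z = T ∧
      ∀ g : Ω → ℝ≥0∞, Measurable g → (∀ ω, (‖f ω‖₊ : ℝ≥0∞) ≤ g ω) →
        (‖z‖₊ : ℝ≥0∞) ≤ ∫⁻ ω, g ω ∂μ := by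
  have hf : ∀ x, Integrable (fun ω => J (f ω) x) μ := fun x =>
    .of_bound (hmeas x) (|CJ| * Cf * ‖x‖) <| .of_forall fun ω =>
      calc ‖J (f ω) x‖ ≤ ‖J (f ω)‖ * ‖x‖ := (J (f ω)).le_opNorm x
        _ ≤ |CJ| * Cf * ‖x‖ := by
          gcongr
          exact (hCJ _).trans (mul_le_mul (le_abs_self _) (hCf ω) (norm_nonneg _) (abs_nonneg _))
  have hfCf : ∀ ω, (‖f ω‖₊ : ℝ≥0∞) ≤ ENNReal.ofReal Cf := fun ω =>
    (ofReal_norm (f ω)).symm.trans_le (ENNReal.ofReal_le_ofReal (hCf ω))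
  obtain ⟨z, hzT, -⟩ := exists_eq_norm_le_lintegral_add J hCJ hball hf hT measurable_const hfCf
    (by simp [lintegral_const, ENNReal.mul_eq_top]) one_pos
  refine ⟨z, hzT, fun g hg hfg => ?_⟩
  rcases eq_or_ne (∫⁻ ω, g ω ∂μ) ∞ with hinf | hfin
  · simp [hinf]
  have hz : ‖z‖ ≤ (∫⁻ ω, g ω ∂μ).toReal := le_of_forall_pos_le_add fun ε hε => by
    obtain ⟨z', hz'T, hz'⟩ := exists_eq_norm_le_lintegral_add J hCJ hball hf hT hg hfg hfin hε
    rwa [hJinj (hz'T.trans hzT.symm)] at hz'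
  exact (ofReal_norm z).symm.trans_le (ENNReal.ofReal_le_of_le_toReal hz)

/-- Let `X`, `Y` be separable Banach spaces and `Z` a Banach space continuously embedded in
`L(X,Y)` (via an injective linear map `J` with `‖Jz‖ ≤ C_J‖z‖_Z`).  If the closed unit ball
of `Z` is closed in `L(X,Y)` for the strong operator topology, then `Z` has the strong
convex compactness property: for every finite measure space `(Ω,Σ,μ)` and every bounded,
strongly measurable `f : Ω → Z`, the operator `T` with `Tx = ∫_Ω f(ω)x dμ(ω)` belongs to
`Z`, with `‖T‖_Z` at most the upper integral of `ω ↦ ‖f(ω)‖_Z`. -/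
theorem stmt_4 {X Y Z : Type*}
    [NormedAddCommGroup X] [NormedSpace ℂ X] [CompleteSpace X]
    [TopologicalSpace.SeparableSpace X]
    [NormedAddCommGroup Y] [NormedSpace ℂ Y] [CompleteSpace Y]
    [TopologicalSpace.SeparableSpace Y]
    [NormedAddCommGroup Z] [NormedSpace ℂ Z] [CompleteSpace Z]
    (J : Z →ₗ[ℂ] (X →L[ℂ] Y)) (hJinj : Function.Injective J)
    (CJ : ℝ) (hCJ : ∀ z : Z, ‖J z‖ ≤ CJ * ‖z‖)
    (hball : ∀ (z : ℕ → Z) (T : X →L[ℂ] Y), (∀ n, ‖z n‖ ≤ 1) →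
      (∀ v : X, Tendsto (fun n => J (z n) v) atTop (𝓝 (T v))) →
      ∃ z₀ : Z, ‖z₀‖ ≤ 1 ∧ J z₀ = T)
    {Ω : Type*} [MeasurableSpace Ω] (μ : Measure Ω) [IsFiniteMeasure μ]
    (f : Ω → Z) (Cf : ℝ) (hCf : ∀ ω, ‖f ω‖ ≤ Cf)
    (hmeas : ∀ v : X, AEStronglyMeasurable (fun ω => J (f ω) v) μ)
    (T : X →L[ℂ] Y) (hT : ∀ v : X, T v = ∫ ω, J (f ω) v ∂μ) :
    ∃ z : Z, J z = T ∧
      ∀ g : Ω → ℝ≥0∞, Measurable g → (∀ ω, (‖f ω‖₊ : ℝ≥0∞) ≤ g ω) →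
        (‖z‖₊ : ℝ≥0∞) ≤ ∫⁻ ω, g ω ∂μ :=
  stmt_4_general J hJinj CJ hCJ hball μ f Cf hCf hmeas T hT
end

section
/- For Borel sets σ₁, σ₂ ⊆ ℂ, the class 𝔄(σ₁×σ₂) of functions admitting integral factorizations, equipped with its natural norm, is a unital Banach algebra contractively included in the bounded Borel functions B(σ₁×σ₂): it is closed under products with ‖φψ‖_𝔄 ≤ ‖φ‖_𝔄 ‖ψ‖_𝔄, contains the constant 1 with norm 1, and ‖φ‖_∞ ≤ ‖φ‖_𝔄. -/
open MeasureTheory Function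

/-- `φ` admits, on `σ₁ × σ₂`, a factorization `φ(λ₁,λ₂) = ∫_Ω a₁(λ₁,ω)a₂(λ₂,ω) dμ(ω)` over
the finite measure space `(Ω,μ)`, with bounded jointly measurable `a₁, a₂` and measurable
dominating functions `c₁(ω) ≥ ‖a₁(·,ω)‖_{B(σ₁)}`, `c₂(ω) ≥ ‖a₂(·,ω)‖_{B(σ₂)}` whose product
integrates to at most `r`. -/
def ARepOn (σ₁ σ₂ : Set ℂ) (φ : ℂ → ℂ → ℂ) (r : ℝ) (Ω : Type) [MeasurableSpace Ω]
    (μ : Measure Ω) : Prop :=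
  IsFiniteMeasure μ ∧
  ∃ (a₁ a₂ : ℂ → Ω → ℂ) (c₁ c₂ : Ω → ℝ),
    Measurable (uncurry a₁) ∧ Measurable (uncurry a₂) ∧
    (∃ C : ℝ, ∀ z ω, ‖a₁ z ω‖ ≤ C) ∧ (∃ C : ℝ, ∀ z ω, ‖a₂ z ω‖ ≤ C) ∧
    Measurable c₁ ∧ Measurable c₂ ∧
    (∀ z ∈ σ₁, ∀ ω, ‖a₁ z ω‖ ≤ c₁ ω) ∧ (∀ z ∈ σ₂, ∀ ω, ‖a₂ z ω‖ ≤ c₂ ω) ∧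
    (∀ z₁ ∈ σ₁, ∀ z₂ ∈ σ₂, φ z₁ z₂ = ∫ ω, a₁ z₁ ω * a₂ z₂ ω ∂μ) ∧
    Integrable (fun ω => c₁ ω * c₂ ω) μ ∧
    ∫ ω, c₁ ω * c₂ ω ∂μ ≤ r

/-- `φ ∈ 𝔄(σ₁ × σ₂)` with witnessed bound `r`. -/
def ARep (σ₁ σ₂ : Set ℂ) (φ : ℂ → ℂ → ℂ) (r : ℝ) : Prop :=
  ∃ (Ω : Type) (m : MeasurableSpace Ω) (μ : @Measure Ω m), @ARepOn σ₁ σ₂ φ r Ω m μ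

/-- Membership in `𝔄(σ₁ × σ₂)`. -/
def MemA (σ₁ σ₂ : Set ℂ) (φ : ℂ → ℂ → ℂ) : Prop := ∃ r : ℝ, ARep σ₁ σ₂ φ r

/-- The norm `‖φ‖_{𝔄(σ₁×σ₂)}`: the infimum over all representations. -/
noncomputable def ANorm (σ₁ σ₂ : Set ℂ) (φ : ℂ → ℂ → ℂ) : ℝ :=
  sInf {r : ℝ | ARep σ₁ σ₂ φ r}

/-! Sums of representations are represented over the disjoint union `Ω₁ ⊕ Ω₂` with the measure
`μ₁ + μ₂`, products over the product space `Ω₁ × Ω₂` with `μ₁ ⊗ μ₂`, where Fubini splits the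
integral of the product kernel `a₁b₁ · a₂b₂` into the product of the two integrals; the constant
`1` is represented over a point. The estimate `‖∫ a₁a₂ dμ‖ ≤ ∫ c₁c₂ dμ` bounds `φ` pointwise by
every admissible `r`, hence by `‖φ‖_𝔄`, and the bounds on `r` pass to the infima. -/

section SumMeasure

variable {α β E : Type*} [MeasurableSpace α] [MeasurableSpace β]
  [NormedAddCommGroup E] {μ : Measure α} {ν : Measure β}

lemma measurableEmbedding_sumInl : MeasurableEmbedding (Sum.inl : α → α ⊕ β) :=
  ⟨Sum.inl_injective, measurable_inl, fun _ hs => hs.inl_image⟩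

lemma measurableEmbedding_sumInr : MeasurableEmbedding (Sum.inr : β → α ⊕ β) :=
  ⟨Sum.inr_injective, measurable_inr, fun _ hs => hs.inr_image⟩

lemma MeasureTheory.Integrable.sumElim {f : α → E} {g : β → E} (hf : Integrable f μ)
    (hg : Integrable g ν) : Integrable (Sum.elim f g) (μ.map Sum.inl + ν.map Sum.inr) :=
  (measurableEmbedding_sumInl.integrable_map_iff (g := Sum.elim f g) |>.2 hf).add_measure
    (measurableEmbedding_sumInr.integrable_map_iff (g := Sum.elim f g) |>.2 hg)

lemma integral_sumElim [NormedSpace ℝ E] {f : α → E} {g : β → E} (hf : Integrable f μ)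
    (hg : Integrable g ν) :
    ∫ x, Sum.elim f g x ∂(μ.map Sum.inl + ν.map Sum.inr) = ∫ x, f x ∂μ + ∫ x, g x ∂ν := by
  have hfg := hf.sumElim hg
  rw [integral_add_measure hfg.left_of_add_measure hfg.right_of_add_measure,
    measurableEmbedding_sumInl.integral_map, measurableEmbedding_sumInr.integral_map]
  rfl

lemma Measurable.uncurry_sumElim {γ δ : Type*} [MeasurableSpace γ] [MeasurableSpace δ]
    {f : γ → α → δ} {g : γ → β → δ} (hf : Measurable (uncurry f)) (hg : Measurable (uncurry g)) :
    Measurable (uncurry fun z => Sum.elim (f z) (g z)) := by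
  have h : uncurry (fun z => Sum.elim (f z) (g z)) =
      Sum.elim (uncurry f) (uncurry g) ∘ MeasurableEquiv.prodSumDistrib γ α β := by
    funext ⟨z, x⟩
    cases x <;> rfl
  rw [h]
  exact (hf.sumElim hg).comp (MeasurableEquiv.measurable _)

end SumMeasure

section ProdMeasure

variable {α β L : Type*} [MeasurableSpace α] [MeasurableSpace β] {μ : Measure α} {ν : Measure β}

lemma MeasureTheory.Integrable.prod_mul_mul_mul [NormedCommRing L] {f₁ f₂ : α → L}
    {g₁ g₂ : β → L} (hf : Integrable (fun x => f₁ x * f₂ x) μ)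
    (hg : Integrable (fun y => g₁ y * g₂ y) ν) :
    Integrable (fun p : α × β => f₁ p.1 * g₁ p.2 * (f₂ p.1 * g₂ p.2)) (μ.prod ν) := by
  simpa only [mul_mul_mul_comm] using hf.mul_prod hg

lemma integral_prod_mul_mul_mul [SFinite μ] [SFinite ν] [RCLike L] (f₁ f₂ : α → L)
    (g₁ g₂ : β → L) :
    ∫ p, f₁ p.1 * g₁ p.2 * (f₂ p.1 * g₂ p.2) ∂μ.prod ν =
      (∫ x, f₁ x * f₂ x ∂μ) * ∫ y, g₁ y * g₂ y ∂ν := by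
  simp_rw [mul_mul_mul_comm]
  exact integral_prod_mul (fun x => f₁ x * f₂ x) (fun y => g₁ y * g₂ y)

end ProdMeasure

lemma integrable_mul_of_uncurry {Ω : Type} [MeasurableSpace Ω] {μ : Measure Ω}
    [IsFiniteMeasure μ] {a₁ a₂ : ℂ → Ω → ℂ} (ha₁ : Measurable (uncurry a₁))
    (ha₂ : Measurable (uncurry a₂)) {C₁ C₂ : ℝ} (hC₁ : ∀ z ω, ‖a₁ z ω‖ ≤ C₁)
    (hC₂ : ∀ z ω, ‖a₂ z ω‖ ≤ C₂) (z₁ z₂ : ℂ) :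
    Integrable (fun ω => a₁ z₁ ω * a₂ z₂ ω) μ :=
  (integrable_const (C₁ * C₂)).mono'
    ((ha₁.comp measurable_prodMk_left).mul (ha₂.comp measurable_prodMk_left)).aestronglyMeasurable
    (ae_of_all _ fun ω => norm_mul_le_of_le (hC₁ z₁ ω) (hC₂ z₂ ω))

lemma le_mul_csInf {T : Set ℝ} (hT : T.Nonempty) {a A : ℝ} (ha : 0 ≤ a)
    (h : ∀ t ∈ T, A ≤ a * t) : A ≤ a * sInf T := by
  rw [← smul_eq_mul, ← Real.sInf_smul_of_nonneg ha]
  exact le_csInf (hT.smul_set) (by rintro _ ⟨t, ht, rfl⟩; exact h t ht)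

lemma le_csInf_mul_csInf {S T : Set ℝ} (hS : S.Nonempty) (hT : T.Nonempty)
    (hS₀ : ∀ s ∈ S, 0 ≤ s) (hT₀ : ∀ t ∈ T, 0 ≤ t) {A : ℝ}
    (h : ∀ s ∈ S, ∀ t ∈ T, A ≤ s * t) : A ≤ sInf S * sInf T := by
  rw [mul_comm]
  refine le_mul_csInf hS (Real.sInf_nonneg hT₀) fun s hs => ?_
  rw [mul_comm]
  exact le_mul_csInf hT (hS₀ s hs) (h s hs)

namespace ARep

variable {σ₁ σ₂ : Set ℂ} {φ ψ : ℂ → ℂ → ℂ} {r s : ℝ}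

lemma norm_le (h : ARep σ₁ σ₂ φ r) {z₁ z₂ : ℂ} (hz₁ : z₁ ∈ σ₁) (hz₂ : z₂ ∈ σ₂) :
    ‖φ z₁ z₂‖ ≤ r := by
  obtain ⟨Ω, _, μ, _, a₁, a₂, c₁, c₂, ha₁, ha₂, ⟨C₁, hC₁⟩, ⟨C₂, hC₂⟩, -, -, hac₁, hac₂,
    hφ, hc, hcr⟩ := h
  rw [hφ z₁ hz₁ z₂ hz₂]
  calc ‖∫ ω, a₁ z₁ ω * a₂ z₂ ω ∂μ‖ ≤ ∫ ω, ‖a₁ z₁ ω * a₂ z₂ ω‖ ∂μ :=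
        norm_integral_le_integral_norm _
    _ ≤ ∫ ω, c₁ ω * c₂ ω ∂μ :=
        integral_mono (integrable_mul_of_uncurry ha₁ ha₂ hC₁ hC₂ z₁ z₂).norm hc fun ω =>
          norm_mul_le_of_le (hac₁ z₁ hz₁ ω) (hac₂ z₂ hz₂ ω)
    _ ≤ r := hcr

lemma nonneg (h₁ : σ₁.Nonempty) (h₂ : σ₂.Nonempty) (h : ARep σ₁ σ₂ φ r) : 0 ≤ r :=
  (norm_nonneg _).trans (h.norm_le h₁.some_mem h₂.some_mem)

lemma add (hφ : ARep σ₁ σ₂ φ r) (hψ : ARep σ₁ σ₂ ψ s) :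
    ARep σ₁ σ₂ (fun z₁ z₂ => φ z₁ z₂ + ψ z₁ z₂) (r + s) := by
  obtain ⟨Ω₁, _, μ, _, a₁, a₂, c₁, c₂, ha₁, ha₂, ⟨C₁, hC₁⟩, ⟨C₂, hC₂⟩, hc₁, hc₂, hac₁, hac₂,
    hφ, hc, hcr⟩ := hφ
  obtain ⟨Ω₂, _, ν, _, b₁, b₂, d₁, d₂, hb₁, hb₂, ⟨D₁, hD₁⟩, ⟨D₂, hD₂⟩, hd₁, hd₂, hbd₁, hbd₂,
    hψ, hd, hds⟩ := hψ
  have hmax {α β : Type} {f : α → ℂ} {g : β → ℂ} {C D : ℝ} (hf : ∀ x, ‖f x‖ ≤ C)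
      (hg : ∀ y, ‖g y‖ ≤ D) : ∀ x, ‖Sum.elim f g x‖ ≤ max C D
    | .inl x => (hf x).trans (le_max_left _ _)
    | .inr y => (hg y).trans (le_max_right _ _)
  have hsum {α β : Type} {f : α → ℂ} {g : β → ℂ} {C : α → ℝ} {D : β → ℝ} (hf : ∀ x, ‖f x‖ ≤ C x)
      (hg : ∀ y, ‖g y‖ ≤ D y) : ∀ x, ‖Sum.elim f g x‖ ≤ Sum.elim C D x
    | .inl x => hf x
    | .inr y => hg y
  refine ⟨Ω₁ ⊕ Ω₂, inferInstance, μ.map Sum.inl + ν.map Sum.inr, inferInstance,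
    fun z => Sum.elim (a₁ z) (b₁ z), fun z => Sum.elim (a₂ z) (b₂ z),
    Sum.elim c₁ d₁, Sum.elim c₂ d₂, ha₁.uncurry_sumElim hb₁, ha₂.uncurry_sumElim hb₂,
    ⟨max C₁ D₁, fun z => hmax (hC₁ z) (hD₁ z)⟩, ⟨max C₂ D₂, fun z => hmax (hC₂ z) (hD₂ z)⟩,
    hc₁.sumElim hd₁, hc₂.sumElim hd₂, fun z hz => hsum (hac₁ z hz) (hbd₁ z hz),
    fun z hz => hsum (hac₂ z hz) (hbd₂ z hz), fun z₁ hz₁ z₂ hz₂ => ?_, ?_, ?_⟩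
  · show φ z₁ z₂ + ψ z₁ z₂ =
      ∫ ω, (Sum.elim (a₁ z₁) (b₁ z₁) * Sum.elim (a₂ z₂) (b₂ z₂)) ω ∂(μ.map Sum.inl + ν.map Sum.inr)
    rw [← Sum.elim_mul_mul, integral_sumElim (f := a₁ z₁ * a₂ z₂) (g := b₁ z₁ * b₂ z₂)
      (integrable_mul_of_uncurry ha₁ ha₂ hC₁ hC₂ z₁ z₂)
      (integrable_mul_of_uncurry hb₁ hb₂ hD₁ hD₂ z₁ z₂), hφ z₁ hz₁ z₂ hz₂, hψ z₁ hz₁ z₂ hz₂]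
    rfl
  · show Integrable (Sum.elim c₁ d₁ * Sum.elim c₂ d₂) _
    rw [← Sum.elim_mul_mul]
    exact hc.sumElim (f := c₁ * c₂) (g := d₁ * d₂) hd
  · show ∫ ω, (Sum.elim c₁ d₁ * Sum.elim c₂ d₂) ω ∂_ ≤ r + s
    rw [← Sum.elim_mul_mul, integral_sumElim (f := c₁ * c₂) (g := d₁ * d₂) hc hd]
    exact add_le_add hcr hds

lemma mul (h₁ : σ₁.Nonempty) (h₂ : σ₂.Nonempty) (hφ : ARep σ₁ σ₂ φ r) (hψ : ARep σ₁ σ₂ ψ s) :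
    ARep σ₁ σ₂ (fun z₁ z₂ => φ z₁ z₂ * ψ z₁ z₂) (r * s) := by
  obtain ⟨Ω₁, _, μ, _, a₁, a₂, c₁, c₂, ha₁, ha₂, ⟨C₁, hC₁⟩, ⟨C₂, hC₂⟩, hc₁, hc₂, hac₁, hac₂,
    hφ, hc, hcr⟩ := hφ
  obtain ⟨Ω₂, _, ν, _, b₁, b₂, d₁, d₂, hb₁, hb₂, ⟨D₁, hD₁⟩, ⟨D₂, hD₂⟩, hd₁, hd₂, hbd₁, hbd₂,
    hψ, hd, hds⟩ := hψ
  have hc₀ (ω : Ω₁) : 0 ≤ c₁ ω * c₂ ω :=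
    mul_nonneg ((norm_nonneg _).trans (hac₁ _ h₁.some_mem ω))
      ((norm_nonneg _).trans (hac₂ _ h₂.some_mem ω))
  have hd₀ (ω : Ω₂) : 0 ≤ d₁ ω * d₂ ω :=
    mul_nonneg ((norm_nonneg _).trans (hbd₁ _ h₁.some_mem ω))
      ((norm_nonneg _).trans (hbd₂ _ h₂.some_mem ω))
  refine ⟨Ω₁ × Ω₂, inferInstance, μ.prod ν, inferInstance,
    fun z p => a₁ z p.1 * b₁ z p.2, fun z p => a₂ z p.1 * b₂ z p.2,
    fun p => c₁ p.1 * d₁ p.2, fun p => c₂ p.1 * d₂ p.2,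
    (ha₁.comp (measurable_fst.prodMk measurable_snd.fst)).mul
      (hb₁.comp (measurable_fst.prodMk measurable_snd.snd)),
    (ha₂.comp (measurable_fst.prodMk measurable_snd.fst)).mul
      (hb₂.comp (measurable_fst.prodMk measurable_snd.snd)),
    ⟨C₁ * D₁, fun z p => norm_mul_le_of_le (hC₁ z p.1) (hD₁ z p.2)⟩,
    ⟨C₂ * D₂, fun z p => norm_mul_le_of_le (hC₂ z p.1) (hD₂ z p.2)⟩,
    (hc₁.comp measurable_fst).mul (hd₁.comp measurable_snd),
    (hc₂.comp measurable_fst).mul (hd₂.comp measurable_snd),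
    fun z hz p => norm_mul_le_of_le (hac₁ z hz p.1) (hbd₁ z hz p.2),
    fun z hz p => norm_mul_le_of_le (hac₂ z hz p.1) (hbd₂ z hz p.2),
    fun z₁ hz₁ z₂ hz₂ => ?_, ?_, ?_⟩
  · beta_reduce
    rw [hφ z₁ hz₁ z₂ hz₂, hψ z₁ hz₁ z₂ hz₂, integral_prod_mul_mul_mul]
  · exact hc.prod_mul_mul_mul hd
  · beta_reduce
    rw [integral_prod_mul_mul_mul]
    exact mul_le_mul hcr hds (integral_nonneg hd₀) ((integral_nonneg hc₀).trans hcr)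

lemma one : ARep σ₁ σ₂ (fun _ _ => 1) 1 :=
  ⟨Unit, inferInstance, Measure.dirac (), inferInstance, fun _ _ => 1, fun _ _ => 1,
    fun _ => 1, fun _ => 1, measurable_const, measurable_const, ⟨1, fun _ _ => by simp⟩,
    ⟨1, fun _ _ => by simp⟩, measurable_const, measurable_const, fun _ _ _ => by simp,
    fun _ _ _ => by simp, fun _ _ _ _ => by simp, by simp, by simp⟩

end ARep

section ANorm

variable {σ₁ σ₂ : Set ℂ} {φ ψ : ℂ → ℂ → ℂ}

lemma MemA.add (hφ : MemA σ₁ σ₂ φ) (hψ : MemA σ₁ σ₂ ψ) :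
    MemA σ₁ σ₂ (fun z₁ z₂ => φ z₁ z₂ + ψ z₁ z₂) :=
  let ⟨r, hr⟩ := hφ
  let ⟨s, hs⟩ := hψ
  ⟨r + s, hr.add hs⟩

lemma MemA.mul (h₁ : σ₁.Nonempty) (h₂ : σ₂.Nonempty) (hφ : MemA σ₁ σ₂ φ)
    (hψ : MemA σ₁ σ₂ ψ) : MemA σ₁ σ₂ (fun z₁ z₂ => φ z₁ z₂ * ψ z₁ z₂) :=
  let ⟨r, hr⟩ := hφ
  let ⟨s, hs⟩ := hψ
  ⟨r * s, hr.mul h₁ h₂ hs⟩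

lemma memA_one : MemA σ₁ σ₂ (fun _ _ => 1) :=
  ⟨1, ARep.one⟩

lemma bddBelow_setOf_ARep (h₁ : σ₁.Nonempty) (h₂ : σ₂.Nonempty) (φ : ℂ → ℂ → ℂ) :
    BddBelow {r | ARep σ₁ σ₂ φ r} :=
  ⟨0, fun _ hr => hr.nonneg h₁ h₂⟩

lemma ANorm_le_of_ARep (h₁ : σ₁.Nonempty) (h₂ : σ₂.Nonempty) {r : ℝ} (h : ARep σ₁ σ₂ φ r) :
    ANorm σ₁ σ₂ φ ≤ r :=
  csInf_le (bddBelow_setOf_ARep h₁ h₂ φ) h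

lemma norm_le_ANorm (hφ : MemA σ₁ σ₂ φ) {z₁ z₂ : ℂ} (hz₁ : z₁ ∈ σ₁) (hz₂ : z₂ ∈ σ₂) :
    ‖φ z₁ z₂‖ ≤ ANorm σ₁ σ₂ φ :=
  le_csInf hφ fun _ hr => hr.norm_le hz₁ hz₂

lemma ANorm_add_le (h₁ : σ₁.Nonempty) (h₂ : σ₂.Nonempty) (hφ : MemA σ₁ σ₂ φ)
    (hψ : MemA σ₁ σ₂ ψ) :
    ANorm σ₁ σ₂ (fun z₁ z₂ => φ z₁ z₂ + ψ z₁ z₂) ≤ ANorm σ₁ σ₂ φ + ANorm σ₁ σ₂ ψ := by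
  unfold ANorm
  rw [← csInf_add (s := {r | ARep σ₁ σ₂ φ r}) (t := {s | ARep σ₁ σ₂ ψ s}) hφ
    (bddBelow_setOf_ARep h₁ h₂ φ) hψ (bddBelow_setOf_ARep h₁ h₂ ψ)]
  exact le_csInf (Set.Nonempty.add hφ hψ) fun _ ⟨r, hr, s, hs, hrs⟩ =>
    hrs ▸ ANorm_le_of_ARep h₁ h₂ (hr.add hs)

lemma ANorm_mul_le (h₁ : σ₁.Nonempty) (h₂ : σ₂.Nonempty) (hφ : MemA σ₁ σ₂ φ)
    (hψ : MemA σ₁ σ₂ ψ) :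
    ANorm σ₁ σ₂ (fun z₁ z₂ => φ z₁ z₂ * ψ z₁ z₂) ≤ ANorm σ₁ σ₂ φ * ANorm σ₁ σ₂ ψ :=
  le_csInf_mul_csInf hφ hψ (fun _ => ARep.nonneg h₁ h₂) (fun _ => ARep.nonneg h₁ h₂)
    fun _ hr _ hs => ANorm_le_of_ARep h₁ h₂ (ARep.mul h₁ h₂ hr hs)

lemma ANorm_one (h₁ : σ₁.Nonempty) (h₂ : σ₂.Nonempty) : ANorm σ₁ σ₂ (fun _ _ => 1) = 1 :=
  le_antisymm (ANorm_le_of_ARep h₁ h₂ ARep.one)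
    (by simpa using norm_le_ANorm memA_one h₁.some_mem h₂.some_mem)

end ANorm

theorem stmt_8_general (σ₁ σ₂ : Set ℂ) (h₁ : σ₁.Nonempty) (h₂ : σ₂.Nonempty) :
    (∀ φ ψ : ℂ → ℂ → ℂ, MemA σ₁ σ₂ φ → MemA σ₁ σ₂ ψ →
      MemA σ₁ σ₂ (fun z₁ z₂ => φ z₁ z₂ + ψ z₁ z₂) ∧
      ANorm σ₁ σ₂ (fun z₁ z₂ => φ z₁ z₂ + ψ z₁ z₂) ≤ ANorm σ₁ σ₂ φ + ANorm σ₁ σ₂ ψ) ∧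
    (∀ φ ψ : ℂ → ℂ → ℂ, MemA σ₁ σ₂ φ → MemA σ₁ σ₂ ψ →
      MemA σ₁ σ₂ (fun z₁ z₂ => φ z₁ z₂ * ψ z₁ z₂) ∧
      ANorm σ₁ σ₂ (fun z₁ z₂ => φ z₁ z₂ * ψ z₁ z₂) ≤ ANorm σ₁ σ₂ φ * ANorm σ₁ σ₂ ψ) ∧
    (MemA σ₁ σ₂ (fun _ _ => 1) ∧ ANorm σ₁ σ₂ (fun _ _ => 1) = 1) ∧
    (∀ φ : ℂ → ℂ → ℂ, MemA σ₁ σ₂ φ →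
      ∀ z₁ ∈ σ₁, ∀ z₂ ∈ σ₂, ‖φ z₁ z₂‖ ≤ ANorm σ₁ σ₂ φ) :=
  ⟨fun _ _ hφ hψ => ⟨hφ.add hψ, ANorm_add_le h₁ h₂ hφ hψ⟩,
    fun _ _ hφ hψ => ⟨hφ.mul h₁ h₂ hψ, ANorm_mul_le h₁ h₂ hφ hψ⟩,
    ⟨memA_one, ANorm_one h₁ h₂⟩,
    fun _ hφ _ hz₁ _ hz₂ => norm_le_ANorm hφ hz₁ hz₂⟩

/-- For Borel sets `σ₁, σ₂ ⊆ ℂ`, the class `𝔄(σ₁×σ₂)` with its natural norm is a unital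
Banach algebra contractively included in `B(σ₁×σ₂)`: it is closed under sums and products
with `‖φ+ψ‖_𝔄 ≤ ‖φ‖_𝔄 + ‖ψ‖_𝔄` and `‖φψ‖_𝔄 ≤ ‖φ‖_𝔄‖ψ‖_𝔄`, contains the constant
function `1` with norm `1`, and satisfies `‖φ‖_∞ ≤ ‖φ‖_𝔄`. -/
theorem stmt_8 (σ₁ σ₂ : Set ℂ) (hσ₁m : MeasurableSet σ₁) (hσ₂m : MeasurableSet σ₂)
    (h₁ : σ₁.Nonempty) (h₂ : σ₂.Nonempty) :
    (∀ φ ψ : ℂ → ℂ → ℂ, MemA σ₁ σ₂ φ → MemA σ₁ σ₂ ψ →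
      MemA σ₁ σ₂ (fun z₁ z₂ => φ z₁ z₂ + ψ z₁ z₂) ∧
      ANorm σ₁ σ₂ (fun z₁ z₂ => φ z₁ z₂ + ψ z₁ z₂) ≤ ANorm σ₁ σ₂ φ + ANorm σ₁ σ₂ ψ) ∧
    (∀ φ ψ : ℂ → ℂ → ℂ, MemA σ₁ σ₂ φ → MemA σ₁ σ₂ ψ →
      MemA σ₁ σ₂ (fun z₁ z₂ => φ z₁ z₂ * ψ z₁ z₂) ∧
      ANorm σ₁ σ₂ (fun z₁ z₂ => φ z₁ z₂ * ψ z₁ z₂) ≤ ANorm σ₁ σ₂ φ * ANorm σ₁ σ₂ ψ) ∧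
    (MemA σ₁ σ₂ (fun _ _ => 1) ∧ ANorm σ₁ σ₂ (fun _ _ => 1) = 1) ∧
    (∀ φ : ℂ → ℂ → ℂ, MemA σ₁ σ₂ φ →
      ∀ z₁ ∈ σ₁, ∀ z₂ ∈ σ₂, ‖φ z₁ z₂‖ ≤ ANorm σ₁ σ₂ φ) :=
  stmt_8_general σ₁ σ₂ h₁ h₂
end

section
/- Let X and Y be finite-dimensional complex normed spaces with bases {e₁,…,eₙ} of X and {f₁,…,fₙ} of Y, and associated coordinate projections P_j ∈ L(X), Q_k ∈ L(Y). Let A = U^{-1}(Σ_j λ_j P_j)U with U ∈ L(X) invertible and B = V^{-1}(Σ_k μ_k Q_k)V with V ∈ L(Y) invertible, where λ_j, μ_k ∈ ℂ. Let f : ℂ → ℂ and define f(A) = U^{-1}(Σ_j f(λ_j)P_j)U and f(B) = V^{-1}(Σ_k f(μ_k)Q_k)V. Then for every S ∈ L(X,Y), f(B)S − Sf(A) = V^{-1} ( Σ_{j,k : λ_j ≠ μ_k} ((f(μ_k)−f(λ_j))/(μ_k−λ_j)) Q_k V(BS−SA)U^{-1} P_j ) U. -/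
/-!
Writing `S = V⁻¹ T U`, both sides are `V⁻¹ (·) U` applied to an identity between diagonal
data: the commutator `diag μ · T − T · diag λ` has entries `(μ_k − λ_j) T_kj`, and multiplying
entrywise by the divided differences of `f` turns them into `(f μ_k − f λ_j) T_kj`, the entries of
`diag (f ∘ μ) · T − T · diag (f ∘ λ)`. Entries with `λ_j = μ_k` vanish on both sides.
-/

open Matrix

lemma ite_ne_sub_div_sub_mul_sub_mul {𝕜 : Type*} [Field 𝕜] [DecidableEq 𝕜] (f : 𝕜 → 𝕜)
    (a b t : 𝕜) :
    (if a ≠ b then (f b - f a) / (b - a) * ((b - a) * t) else 0) = (f b - f a) * t := by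
  split_ifs with h
  · rw [← mul_assoc, div_mul_cancel₀ _ (sub_ne_zero.mpr h.symm)]
  · rw [not_not.mp h, sub_self, zero_mul]

section Commutator

variable {R : Type*} [CommRing R] {m n : Type*} [Fintype m] [Fintype n]
  [DecidableEq m] [DecidableEq n]

lemma diagonal_mul_sub_mul_diagonal_apply (mu : m → R) (lam : n → R) (T : Matrix m n R)
    (k : m) (j : n) :
    (diagonal mu * T - T * diagonal lam) k j = (mu k - lam j) * T k j := by
  simp only [Matrix.sub_apply, diagonal_mul, mul_diagonal]
  ring

lemma sum_ite_ne_smul_single_mul_commutator_mul_single {𝕜 : Type*} [Field 𝕜] [DecidableEq 𝕜]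
    (lam : n → 𝕜) (mu : m → 𝕜) (f : 𝕜 → 𝕜) (T : Matrix m n 𝕜) :
    (∑ j : n, ∑ k : m,
        if lam j ≠ mu k then
          ((f (mu k) - f (lam j)) / (mu k - lam j)) •
            (single k k (1 : 𝕜) * (diagonal mu * T - T * diagonal lam) * single j j (1 : 𝕜))
        else 0) =
      diagonal (fun k => f (mu k)) * T - T * diagonal (fun j => f (lam j)) := by
  simp_rw [single_mul_mul_single, one_mul, mul_one, smul_single, smul_eq_mul]
  simp_rw [diagonal_mul_sub_mul_diagonal_apply]
  have ite_single : ∀ (p : Prop) [Decidable p] (k : m) (j : n) (c : 𝕜),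
      (if p then single k j c else 0) = single k j (if p then c else 0) :=
    fun p _ k j c => by rw [apply_ite (single k j), single_zero]
  simp_rw [ite_single, ite_ne_sub_div_sub_mul_sub_mul]
  rw [Finset.sum_comm, sum_sum_single]
  ext k j
  rw [of_apply, diagonal_mul_sub_mul_diagonal_apply]

end Commutator

section Conjugation

variable {R : Type*} [Ring R] {p p' q q' : R}

lemma mul_mul_mul_eq_of_mul_eq_one (hp : p * p' = 1) (hq : q * q' = 1) (x : R) :
    p * (p' * x * q) * q' = x := by
  simp only [← mul_assoc, hp, one_mul]
  rw [mul_assoc, hq, mul_one]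

lemma conj_mul_sub_mul_conj (hp : p * p' = 1) (hq : q * q' = 1) (d e t : R) :
    p' * d * p * (p' * t * q) - p' * t * q * (q' * e * q) = p' * (d * t - t * e) * q := by
  simp only [mul_sub, sub_mul, ← mul_assoc]
  rw [mul_assoc (p' * d) p p', hp, mul_one, mul_assoc (p' * t) q q', hq, mul_one]

end Conjugation

/-- Let `A = U⁻¹ diag(λ) U` and `B = V⁻¹ diag(μ) V` be diagonalizable operators on
finite-dimensional spaces (with coordinate projections `P_j = E_{jj}`, `Q_k = E_{kk}`),
and set `f(A) = U⁻¹ diag(f∘λ) U`, `f(B) = V⁻¹ diag(f∘μ) V`.  Then for every `S`,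
`f(B)S − Sf(A)` equals
`V⁻¹ (Σ_{j,k : λ_j ≠ μ_k} ((f(μ_k)−f(λ_j))/(μ_k−λ_j)) Q_k (V(BS−SA)U⁻¹) P_j) U`. -/
theorem stmt_9 {n : ℕ} (U U' V V' : Matrix (Fin n) (Fin n) ℂ)
    (hU : U * U' = 1) (hU' : U' * U = 1) (hV : V * V' = 1) (hV' : V' * V = 1)
    (lam mu : Fin n → ℂ) (f : ℂ → ℂ) (S : Matrix (Fin n) (Fin n) ℂ)
    (A B fA fB : Matrix (Fin n) (Fin n) ℂ)
    (hA : A = U' * Matrix.diagonal lam * U)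
    (hB : B = V' * Matrix.diagonal mu * V)
    (hfA : fA = U' * Matrix.diagonal (fun j => f (lam j)) * U)
    (hfB : fB = V' * Matrix.diagonal (fun k => f (mu k)) * V) :
    fB * S - S * fA =
      V' * (∑ j : Fin n, ∑ k : Fin n,
        if lam j ≠ mu k then
          ((f (mu k) - f (lam j)) / (mu k - lam j)) •
            (Matrix.single k k 1 * (V * (B * S - S * A) * U') *
              Matrix.single j j 1)
        else 0) * U := by
  obtain ⟨T, rfl⟩ : ∃ T, S = V' * T * U :=
    ⟨V * S * U', (mul_mul_mul_eq_of_mul_eq_one hV' hU' S).symm⟩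
  subst hA hB hfA hfB
  rw [conj_mul_sub_mul_conj hV hU, conj_mul_sub_mul_conj hV hU,
    mul_mul_mul_eq_of_mul_eq_one hV hU, sum_ite_ne_smul_single_mul_commutator_mul_single]
end

section
/- Let 1 < p < ∞ with conjugate exponent p* (1/p + 1/p* = 1), and let S = {s_{jk}} be an infinite matrix. Then S defines a p-summing operator from ℓ_{p*} to ℓ_p if and only if c_p := (Σ_j Σ_k |s_{jk}|^p)^{1/p} < ∞, and in that case the p-summing norm π_p(S) equals c_p. -/
open scoped ENNReal

/-- `T` is `p`-summing with constant `C`: for every finite family `x₁,…,x_m` in `X`,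
`(Σ ‖T xⱼ‖^p)^{1/p} ≤ C · sup_{‖x*‖ ≤ 1} (Σ |⟨x*, xⱼ⟩|^p)^{1/p}`. -/
def IsPSummingWith {X Y : Type*} [NormedAddCommGroup X] [NormedSpace ℂ X]
    [NormedAddCommGroup Y] [NormedSpace ℂ Y] (p : ℝ) (T : X →L[ℂ] Y) (C : ℝ) : Prop :=
  ∀ (m : ℕ) (x : Fin m → X),
    (∑ j, ‖T (x j)‖ ^ p) ^ (1 / p) ≤
      C * ⨆ φ : {φ : X →L[ℂ] ℂ // ‖φ‖ ≤ 1}, (∑ j, ‖(φ : X →L[ℂ] ℂ) (x j)‖ ^ p) ^ (1 / p)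

/-- The `p`-summing norm `π_p(T)`. -/
noncomputable def pSummingNorm {X Y : Type*} [NormedAddCommGroup X] [NormedSpace ℂ X]
    [NormedAddCommGroup Y] [NormedSpace ℂ Y] (p : ℝ) (T : X →L[ℂ] Y) : ℝ :=
  sInf {C : ℝ | 0 ≤ C ∧ IsPSummingWith p T C}

/-! Testing the `p`-summing inequality on unit vectors `e_k` of `ℓ_q`, whose weak `ℓ_p` norm is at
most `1` because `ℓ_p` norms the functionals on `ℓ_q`, bounds every finite part of
`Σ_{j,k} |s_{jk}|^p` by `C^p`. Conversely, `(T x)_j = ⟨a_j, x⟩` for the rows `a_j ∈ ℓ_p`, and any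
functional `ψ` satisfies `Σ_i |ψ x_i|^p ≤ ‖ψ‖^p w_p(x)^p`; summing over `j` gives
`Σ_i ‖T x_i‖^p ≤ (Σ_j ‖a_j‖^p) w_p(x)^p = c_p^p w_p(x)^p`. -/

section WeakNorm

variable {X Y : Type*} [NormedAddCommGroup X] [NormedSpace ℂ X]
  [NormedAddCommGroup Y] [NormedSpace ℂ Y] {p : ℝ}

noncomputable def weakPNorm (p : ℝ) {m : ℕ} (x : Fin m → X) : ℝ :=
  ⨆ φ : {φ : X →L[ℂ] ℂ // ‖φ‖ ≤ 1}, (∑ j, ‖(φ : X →L[ℂ] ℂ) (x j)‖ ^ p) ^ (1 / p)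

lemma weakPNorm_nonneg {m : ℕ} (x : Fin m → X) : 0 ≤ weakPNorm p x :=
  Real.iSup_nonneg fun _ => by positivity

lemma bddAbove_weakPNorm (hp : 0 ≤ p) {m : ℕ} (x : Fin m → X) :
    BddAbove (Set.range fun φ : {φ : X →L[ℂ] ℂ // ‖φ‖ ≤ 1} =>
      (∑ j, ‖(φ : X →L[ℂ] ℂ) (x j)‖ ^ p) ^ (1 / p)) := by
  refine ⟨(∑ j, ‖x j‖ ^ p) ^ (1 / p), ?_⟩
  rintro - ⟨⟨φ, hφ⟩, rfl⟩
  refine Real.rpow_le_rpow (by positivity) (Finset.sum_le_sum fun j _ => ?_) (by positivity)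
  exact Real.rpow_le_rpow (norm_nonneg _) (by simpa using φ.le_of_opNorm_le hφ (x j)) hp

lemma sum_norm_rpow_le_weakPNorm_rpow (hp : 0 < p) {m : ℕ} (x : Fin m → X)
    {φ : X →L[ℂ] ℂ} (hφ : ‖φ‖ ≤ 1) : ∑ j, ‖φ (x j)‖ ^ p ≤ weakPNorm p x ^ p := by
  rw [← Real.rpow_inv_le_iff_of_pos (by positivity) (weakPNorm_nonneg x) hp, ← one_div]
  exact le_ciSup (bddAbove_weakPNorm hp.le x) ⟨φ, hφ⟩

lemma weakPNorm_le_one (hp : 0 < p) {m : ℕ} {x : Fin m → X}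
    (hx : ∀ φ : X →L[ℂ] ℂ, ‖φ‖ ≤ 1 → ∑ j, ‖φ (x j)‖ ^ p ≤ 1) : weakPNorm p x ≤ 1 :=
  Real.iSup_le (fun φ => Real.rpow_le_one (by positivity) (hx φ φ.2) (by positivity)) zero_le_one

lemma sum_norm_apply_rpow_le (hp : 0 < p) (ψ : X →L[ℂ] ℂ) {m : ℕ} (x : Fin m → X) :
    ∑ j, ‖ψ (x j)‖ ^ p ≤ ‖ψ‖ ^ p * weakPNorm p x ^ p := by
  rcases eq_or_ne ψ 0 with rfl | hψ
  · simp [Real.zero_rpow hp.ne']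
  have hψ' : 0 < ‖ψ‖ := norm_pos_iff.mpr hψ
  set φ : X →L[ℂ] ℂ := ((‖ψ‖⁻¹ : ℝ) : ℂ) • ψ
  have hφ : ‖φ‖ ≤ 1 := by
    simp [φ, norm_smul, inv_mul_cancel₀ hψ'.ne']
  have hψφ : ∀ j, ‖ψ (x j)‖ ^ p = ‖ψ‖ ^ p * ‖φ (x j)‖ ^ p := fun j => by
    rw [← Real.mul_rpow hψ'.le (norm_nonneg _)]
    simp [φ, mul_inv_cancel_left₀ hψ'.ne']
  rw [Finset.sum_congr rfl fun j _ => hψφ j, ← Finset.mul_sum]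
  gcongr
  exact sum_norm_rpow_le_weakPNorm_rpow hp x hφ

lemma isPSummingWith_iff_sum_rpow_le (hp : 0 < p) {T : X →L[ℂ] Y} {C : ℝ} (hC : 0 ≤ C) :
    IsPSummingWith p T C ↔
      ∀ (m : ℕ) (x : Fin m → X), ∑ j, ‖T (x j)‖ ^ p ≤ C ^ p * weakPNorm p x ^ p := by
  refine forall₂_congr fun m x => ?_
  change (∑ j, ‖T (x j)‖ ^ p) ^ (1 / p) ≤ C * weakPNorm p x ↔ _
  rw [one_div, Real.rpow_inv_le_iff_of_pos (by positivity)
    (mul_nonneg hC (weakPNorm_nonneg x)) hp, Real.mul_rpow hC (weakPNorm_nonneg x)]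

end WeakNorm

section RowOperators

variable {ι : Type*} {E : ι → Type*} [∀ i, NormedAddCommGroup (E i)] {p : ℝ}

lemma lp.norm_rpow_eq_tsum_ofReal (hp : 0 < p) (f : lp E (ENNReal.ofReal p)) :
    ‖f‖ ^ p = ∑' i, ‖f i‖ ^ p := by
  simpa [hp.le] using lp.norm_rpow_eq_tsum (by rwa [ENNReal.toReal_ofReal hp.le]) f

lemma lp.summable_norm_rpow_ofReal (hp : 0 < p) (f : lp E (ENNReal.ofReal p)) :
    Summable fun i => ‖f i‖ ^ p := by
  simpa [hp.le] using (lp.memℓp f).summable (by rwa [ENNReal.toReal_ofReal hp.le])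

lemma memℓp_ofReal_of_summable (hp : 0 ≤ p) {f : ∀ i, E i} (hf : Summable fun i => ‖f i‖ ^ p) :
    Memℓp f (ENNReal.ofReal p) :=
  memℓp_gen (by simpa [hp] using hf)

lemma pos_of_one_le_ofReal (h : 1 ≤ ENNReal.ofReal p) : 0 < p :=
  zero_lt_one.trans_le (ENNReal.one_le_ofReal.mp h)

variable {X : Type*} [NormedAddCommGroup X] [NormedSpace ℂ X] [Fact (1 ≤ ENNReal.ofReal p)]

lemma summable_norm_apply_rpow {ψ : ι → X →L[ℂ] ℂ} (hψ : Summable fun j => ‖ψ j‖ ^ p) (x : X) :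
    Summable fun j => ‖ψ j x‖ ^ p := by
  have hp := pos_of_one_le_ofReal (Fact.out : 1 ≤ ENNReal.ofReal p)
  refine (hψ.mul_right (‖x‖ ^ p)).of_nonneg_of_le (fun _ => by positivity) fun j => ?_
  rw [← Real.mul_rpow (norm_nonneg _) (norm_nonneg _)]
  exact Real.rpow_le_rpow (norm_nonneg _) ((ψ j).le_opNorm x) hp.le

noncomputable def rowsToLp (ψ : ι → X →L[ℂ] ℂ) (hψ : Summable fun j => ‖ψ j‖ ^ p) :
    X →L[ℂ] lp (fun _ : ι => ℂ) (ENNReal.ofReal p) :=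
  have hp := pos_of_one_le_ofReal (Fact.out : 1 ≤ ENNReal.ofReal p)
  LinearMap.mkContinuous
    { toFun x := ⟨fun j => ψ j x, memℓp_ofReal_of_summable hp.le (summable_norm_apply_rpow hψ x)⟩
      map_add' _ _ := by ext; simp; rfl
      map_smul' _ _ := by ext; simp }
    ((∑' j, ‖ψ j‖ ^ p) ^ (1 / p))
    fun x => by
      refine lp.norm_le_of_tsum_le (by rwa [ENNReal.toReal_ofReal hp.le]) (by positivity) ?_
      simp only [LinearMap.coe_mk, AddHom.coe_mk, ENNReal.toReal_ofReal hp.le]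
      rw [Real.mul_rpow (by positivity) (norm_nonneg _), one_div,
        Real.rpow_inv_rpow (tsum_nonneg fun _ => by positivity) hp.ne', ← tsum_mul_right]
      refine (summable_norm_apply_rpow hψ x).tsum_le_tsum (fun j => ?_) (hψ.mul_right _)
      rw [← Real.mul_rpow (norm_nonneg _) (norm_nonneg _)]
      exact Real.rpow_le_rpow (norm_nonneg _) ((ψ j).le_opNorm x) hp.le

lemma isPSummingWith_of_norm_le {T : X →L[ℂ] lp (fun _ : ι => ℂ) (ENNReal.ofReal p)}
    {ψ : ι → X →L[ℂ] ℂ} (hTψ : ∀ x j, (T x : ι → ℂ) j = ψ j x) {b : ι → ℝ}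
    (hψb : ∀ j, ‖ψ j‖ ≤ b j) (hb : Summable fun j => b j ^ p) :
    IsPSummingWith p T ((∑' j, b j ^ p) ^ (1 / p)) := by
  have hp := pos_of_one_le_ofReal (Fact.out : 1 ≤ ENNReal.ofReal p)
  have hψ : ∀ j, ‖ψ j‖ ^ p ≤ b j ^ p := fun j =>
    Real.rpow_le_rpow (norm_nonneg _) (hψb j) hp.le
  have hψs : Summable fun j => ‖ψ j‖ ^ p := hb.of_nonneg_of_le (fun _ => by positivity) hψ
  have hbp : 0 ≤ ∑' j, b j ^ p :=
    tsum_nonneg fun j => Real.rpow_nonneg ((norm_nonneg _).trans (hψb j)) p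
  refine (isPSummingWith_iff_sum_rpow_le hp (by positivity)).mpr fun m x => ?_
  rw [one_div, Real.rpow_inv_rpow hbp hp.ne', ← tsum_mul_right]
  calc ∑ i, ‖T (x i)‖ ^ p
      = ∑' j, ∑ i, ‖ψ j (x i)‖ ^ p := by
        simp_rw [lp.norm_rpow_eq_tsum_ofReal hp, hTψ]
        exact (Summable.tsum_finsetSum fun i _ => summable_norm_apply_rpow hψs (x i)).symm
    _ ≤ ∑' j, b j ^ p * weakPNorm p x ^ p := by
        refine Summable.tsum_le_tsum (fun j => ?_)
          (summable_sum fun i _ => summable_norm_apply_rpow hψs (x i)) (hb.mul_right _)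
        exact (sum_norm_apply_rpow_le hp (ψ j) x).trans
          (mul_le_mul_of_nonneg_right (hψ j) (Real.rpow_nonneg (weakPNorm_nonneg x) p))

end RowOperators

lemma Real.HolderConjugate.le_rpow_of_le_mul_rpow_inv {p r S N : ℝ} (hpr : p.HolderConjugate r)
    (hS : 0 ≤ S) (hN : 0 ≤ N) (h : S ≤ N * S ^ r⁻¹) : S ≤ N ^ p := by
  rcases hS.eq_or_lt with rfl | hS
  · positivity
  have hsplit : S = S ^ p⁻¹ * S ^ r⁻¹ := by
    rw [← Real.rpow_add hS, hpr.inv_add_inv_eq_one, Real.rpow_one]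
  have hle : S ^ p⁻¹ ≤ N := by
    refine le_of_mul_le_mul_right ?_ (Real.rpow_pos_of_pos hS r⁻¹)
    rwa [← hsplit]
  exact (Real.rpow_inv_le_iff_of_pos hS.le hN hpr.pos).mp hle

lemma sum_norm_apply_single_rpow_le_opNorm_rpow {κ : Type*} [DecidableEq κ] {q : ℝ≥0∞}
    [Fact (1 ≤ q)] {p : ℝ} (hpq : p.HolderConjugate q.toReal) (φ : lp (fun _ : κ => ℂ) q →L[ℂ] ℂ)
    (v : Finset κ) : ∑ k ∈ v, ‖φ (lp.single q k 1)‖ ^ p ≤ ‖φ‖ ^ p := by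
  set a : κ → ℂ := fun k => φ (lp.single q k 1)
  set S := ∑ k ∈ v, ‖a k‖ ^ p
  -- the extremal vector for Hölder's inequality: `b k * a k = ‖a k‖ ^ p`, `‖b k‖ ^ q = ‖a k‖ ^ p`
  set b : κ → ℂ := fun k => (‖a k‖ ^ p : ℝ) * (a k)⁻¹
  have hba : ∀ k, b k * a k = (‖a k‖ ^ p : ℝ) := fun k => by
    rcases eq_or_ne (a k) 0 with h | h
    · simp [b, h, Real.zero_rpow hpq.pos.ne']
    · simp [b, h]
  have hb : ∀ k, ‖b k‖ ^ q.toReal = ‖a k‖ ^ p := fun k => by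
    rcases eq_or_ne (a k) 0 with h | h
    · simp [b, h, Real.zero_rpow hpq.pos.ne', Real.zero_rpow hpq.symm.pos.ne']
    · have hbk : ‖b k‖ = ‖a k‖ ^ (p - 1) := by
        rw [Real.rpow_sub_one (norm_ne_zero_iff.mpr h)]
        simp [b, div_eq_mul_inv, abs_of_nonneg (Real.rpow_nonneg (norm_nonneg (a k)) p)]
      rw [hbk, ← Real.rpow_mul (norm_nonneg _), hpq.sub_one_mul_conj]
  set y : lp (fun _ : κ => ℂ) q := ∑ k ∈ v, lp.single q k (b k)
  have hφy : φ y = S := by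
    have hsingle : ∀ k, lp.single q k (b k) = b k • lp.single (E := fun _ : κ => ℂ) q k 1 :=
      fun k => by rw [← lp.single_smul, smul_eq_mul, mul_one]
    simp only [y, S, map_sum, hsingle, map_smul, smul_eq_mul, Complex.ofReal_sum]
    exact Finset.sum_congr rfl fun k _ => hba k
  have hy : ‖y‖ = S ^ q.toReal⁻¹ := by
    rw [show S = ∑ k ∈ v, ‖b k‖ ^ q.toReal from Finset.sum_congr rfl fun k _ => (hb k).symm,
      ← lp.norm_sum_single hpq.symm.pos, Real.rpow_rpow_inv (norm_nonneg _) hpq.symm.pos.ne']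
  have hS : 0 ≤ S := by positivity
  refine hpq.le_rpow_of_le_mul_rpow_inv hS (norm_nonneg φ) ?_
  calc S = ‖φ y‖ := by rw [hφy, Complex.norm_real, Real.norm_of_nonneg hS]
    _ ≤ ‖φ‖ * S ^ q.toReal⁻¹ := hy ▸ φ.le_opNorm y

lemma IsPSummingWith.sum_norm_apply_single_rpow_le {κ Y : Type*} [DecidableEq κ]
    [NormedAddCommGroup Y] [NormedSpace ℂ Y] {q : ℝ≥0∞} [Fact (1 ≤ q)] {p : ℝ}
    (hpq : p.HolderConjugate q.toReal) {T : lp (fun _ : κ => ℂ) q →L[ℂ] Y} {C : ℝ}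
    (hT : IsPSummingWith p T C) (hC : 0 ≤ C) (v : Finset κ) :
    ∑ k ∈ v, ‖T (lp.single q k 1)‖ ^ p ≤ C ^ p := by
  have hp := hpq.pos
  have hreindex : ∀ f : κ → ℝ, ∑ i, f (v.equivFin.symm i) = ∑ k ∈ v, f k := fun f =>
    (v.equivFin.symm.sum_comp (f ∘ (↑))).trans (v.sum_coe_sort f)
  set x : Fin v.card → lp (fun _ : κ => ℂ) q := fun i => lp.single q (v.equivFin.symm i) 1
  have hx : weakPNorm p x ≤ 1 := weakPNorm_le_one hp fun φ hφ => by
    rw [hreindex fun k => ‖φ (lp.single q k 1)‖ ^ p]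
    exact (sum_norm_apply_single_rpow_le_opNorm_rpow hpq φ v).trans
      (Real.rpow_le_one (norm_nonneg _) hφ hp.le)
  calc ∑ k ∈ v, ‖T (lp.single q k 1)‖ ^ p = ∑ i, ‖T (x i)‖ ^ p := (hreindex _).symm
    _ ≤ C ^ p * weakPNorm p x ^ p := (isPSummingWith_iff_sum_rpow_le hp hC).mp hT _ x
    _ ≤ C ^ p := mul_le_of_le_one_right (by positivity)
        (Real.rpow_le_one (weakPNorm_nonneg x) hx hp.le)

section Matrix

variable {ι κ : Type*} {p : ℝ} {q : ℝ≥0∞} [Fact (1 ≤ q)] [Fact (1 ≤ ENNReal.ofReal p)]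
  {s : ι → κ → ℂ}

def ActsByMatrix {r : ℝ≥0∞} [Fact (1 ≤ r)]
    (T : lp (fun _ : κ => ℂ) q →L[ℂ] lp (fun _ : ι => ℂ) r) (s : ι → κ → ℂ) : Prop :=
  ∀ x j, (T x : ι → ℂ) j = ∑' k, s j k * x k

variable {T : lp (fun _ : κ => ℂ) q →L[ℂ] lp (fun _ : ι => ℂ) (ENNReal.ofReal p)}

lemma ActsByMatrix.apply_single [DecidableEq κ] (hT : ActsByMatrix T s) (j : ι) (k : κ) :
    (T (lp.single q k 1) : ι → ℂ) j = s j k := by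
  rw [hT, tsum_eq_single k fun k' hk' => by simp [Pi.single_eq_of_ne hk']]
  simp

lemma ActsByMatrix.sum_norm_rpow_le (hpq : p.HolderConjugate q.toReal) (hT : ActsByMatrix T s)
    {C : ℝ} (hTC : IsPSummingWith p T C) (hC : 0 ≤ C) (u : Finset (ι × κ)) :
    ∑ jk ∈ u, ‖s jk.1 jk.2‖ ^ p ≤ C ^ p := by
  classical
  have hp := hpq.pos
  have hcol : ∀ k, (fun j => ‖s j k‖ ^ p) = fun j => ‖(T (lp.single q k 1) : ι → ℂ) j‖ ^ p :=
    fun k => by simp_rw [hT.apply_single]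
  calc ∑ jk ∈ u, ‖s jk.1 jk.2‖ ^ p
      ≤ ∑ jk ∈ u.image Prod.fst ×ˢ u.image Prod.snd, ‖s jk.1 jk.2‖ ^ p :=
        Finset.sum_le_sum_of_subset_of_nonneg Finset.subset_product fun _ _ _ => by positivity
    _ = ∑ k ∈ u.image Prod.snd, ∑ j ∈ u.image Prod.fst, ‖s j k‖ ^ p :=
        Finset.sum_product_right ..
    _ ≤ ∑ k ∈ u.image Prod.snd, ‖T (lp.single q k 1)‖ ^ p := by
        gcongr with k
        rw [lp.norm_rpow_eq_tsum_ofReal hp, ← hcol]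
        exact Summable.sum_le_tsum _ (fun _ _ => by positivity)
          (hcol k ▸ lp.summable_norm_rpow_ofReal hp _)
    _ ≤ C ^ p := hTC.sum_norm_apply_single_rpow_le hpq hC _

lemma ActsByMatrix.summable_norm_rpow (hpq : p.HolderConjugate q.toReal) (hT : ActsByMatrix T s)
    {C : ℝ} (hTC : IsPSummingWith p T C) (hC : 0 ≤ C) :
    Summable fun jk : ι × κ => ‖s jk.1 jk.2‖ ^ p :=
  summable_of_sum_le (fun _ => by positivity) (hT.sum_norm_rpow_le hpq hTC hC)

noncomputable def matrixRow (hs : Summable fun jk : ι × κ => ‖s jk.1 jk.2‖ ^ p) (j : ι) :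
    lp (fun _ : κ => ℂ) (ENNReal.ofReal p) :=
  ⟨s j, memℓp_ofReal_of_summable (pos_of_one_le_ofReal Fact.out).le (hs.prod_factor j)⟩

lemma summable_norm_matrixRow_rpow (hs : Summable fun jk : ι × κ => ‖s jk.1 jk.2‖ ^ p) :
    Summable fun j => ‖matrixRow hs j‖ ^ p := by
  have hp := pos_of_one_le_ofReal (Fact.out : 1 ≤ ENNReal.ofReal p)
  simp_rw [lp.norm_rpow_eq_tsum_ofReal hp]
  exact ((summable_prod_of_nonneg fun _ => by positivity).mp hs).2

lemma tsum_norm_matrixRow_rpow (hs : Summable fun jk : ι × κ => ‖s jk.1 jk.2‖ ^ p) :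
    ∑' j, ‖matrixRow hs j‖ ^ p = ∑' jk : ι × κ, ‖s jk.1 jk.2‖ ^ p := by
  have hp := pos_of_one_le_ofReal (Fact.out : 1 ≤ ENNReal.ofReal p)
  simp_rw [lp.norm_rpow_eq_tsum_ofReal hp]
  exact (hs.tsum_prod' hs.prod_factor).symm

variable [(ENNReal.ofReal p).HolderConjugate q]

variable (q) in
noncomputable def matrixRowFunctional (hs : Summable fun jk : ι × κ => ‖s jk.1 jk.2‖ ^ p) (j : ι) :
    lp (fun _ : κ => ℂ) q →L[ℂ] ℂ :=
  lp.dualPairing (ENNReal.ofReal p) q (fun _ => ContinuousLinearMap.mul ℂ ℂ)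
    (K := 1) (fun _ => by simp) (matrixRow hs j)

lemma norm_matrixRowFunctional_le (hs : Summable fun jk : ι × κ => ‖s jk.1 jk.2‖ ^ p) (j : ι) :
    ‖matrixRowFunctional q hs j‖ ≤ ‖matrixRow hs j‖ := by
  refine (ContinuousLinearMap.le_of_opNorm_le _ (lp.norm_dualPairing _ _) _).trans_eq ?_
  simp

lemma exists_actsByMatrix (hs : Summable fun jk : ι × κ => ‖s jk.1 jk.2‖ ^ p) :
    ∃ T : lp (fun _ : κ => ℂ) q →L[ℂ] lp (fun _ : ι => ℂ) (ENNReal.ofReal p),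
      ActsByMatrix T s := by
  have hp := pos_of_one_le_ofReal (Fact.out : 1 ≤ ENNReal.ofReal p)
  have hψ : Summable fun j => ‖matrixRowFunctional q hs j‖ ^ p :=
    (summable_norm_matrixRow_rpow hs).of_nonneg_of_le (fun _ => by positivity) fun j =>
      Real.rpow_le_rpow (norm_nonneg _) (norm_matrixRowFunctional_le hs j) hp.le
  exact ⟨rowsToLp _ hψ, fun _ _ => rfl⟩

lemma ActsByMatrix.isPSummingWith (hT : ActsByMatrix T s)
    (hs : Summable fun jk : ι × κ => ‖s jk.1 jk.2‖ ^ p) :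
    IsPSummingWith p T ((∑' jk : ι × κ, ‖s jk.1 jk.2‖ ^ p) ^ (1 / p)) := by
  rw [← tsum_norm_matrixRow_rpow hs]
  exact isPSummingWith_of_norm_le (ψ := matrixRowFunctional q hs) (fun x j => hT x j)
    (norm_matrixRowFunctional_le hs) (summable_norm_matrixRow_rpow hs)

lemma ActsByMatrix.pSummingNorm_eq (hpq : p.HolderConjugate q.toReal)
    (hT : ActsByMatrix T s) {C : ℝ} (hTC : IsPSummingWith p T C) (hC : 0 ≤ C) :
    pSummingNorm p T = (∑' jk : ι × κ, ‖s jk.1 jk.2‖ ^ p) ^ (1 / p) := by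
  have hs := hT.summable_norm_rpow hpq hTC hC
  refine le_antisymm (csInf_le ⟨0, fun _ hD => hD.1⟩ ⟨by positivity, hT.isPSummingWith hs⟩) ?_
  refine le_csInf ⟨C, hC, hTC⟩ fun D ⟨hD, hTD⟩ => ?_
  rw [one_div, Real.rpow_inv_le_iff_of_pos (by positivity) hD hpq.pos]
  exact hs.tsum_le_of_sum_le (hT.sum_norm_rpow_le hpq hTD hD)

end Matrix

/-- Let `1 < p < ∞` with conjugate exponent `p*` (here `q = p*` as an extended real, with
`1/p + 1/q = 1`), and let `s = {s_{jk}}` be an infinite matrix.  Then `s` defines a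
`p`-summing operator from `ℓ_{p*}` to `ℓ_p` if and only if
`c_p = (Σ_{j,k} |s_{jk}|^p)^{1/p} < ∞`, and in that case `π_p(S) = c_p`. -/
theorem stmt_11 (p : ℝ) (hp : 1 < p) (q : ℝ≥0∞) [Fact (1 ≤ q)]
    [Fact (1 ≤ ENNReal.ofReal p)]
    (hq : 1 / ENNReal.ofReal p + 1 / q = 1)
    (s : ℕ → ℕ → ℂ) :
    ((∃ T : lp (fun _ : ℕ => ℂ) q →L[ℂ] lp (fun _ : ℕ => ℂ) (ENNReal.ofReal p),
        (∀ (x : lp (fun _ : ℕ => ℂ) q) (j : ℕ),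
          (T x : ∀ _ : ℕ, ℂ) j = ∑' k : ℕ, s j k * (x : ∀ _ : ℕ, ℂ) k) ∧
        ∃ C : ℝ, 0 ≤ C ∧ IsPSummingWith p T C) ↔
      Summable (fun jk : ℕ × ℕ => ‖s jk.1 jk.2‖ ^ p)) ∧
    (∀ T : lp (fun _ : ℕ => ℂ) q →L[ℂ] lp (fun _ : ℕ => ℂ) (ENNReal.ofReal p),
      (∀ (x : lp (fun _ : ℕ => ℂ) q) (j : ℕ),
        (T x : ∀ _ : ℕ, ℂ) j = ∑' k : ℕ, s j k * (x : ∀ _ : ℕ, ℂ) k) →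
      (∃ C : ℝ, 0 ≤ C ∧ IsPSummingWith p T C) →
      pSummingNorm p T = (∑' jk : ℕ × ℕ, ‖s jk.1 jk.2‖ ^ p) ^ (1 / p)) := by
  have hp₀ : (ENNReal.ofReal p).toReal = p := ENNReal.toReal_ofReal (zero_lt_one.trans hp).le
  have : (ENNReal.ofReal p).HolderConjugate q :=
    ENNReal.holderConjugate_iff.mpr (by simpa only [one_div] using hq)
  have hpq : p.HolderConjugate q.toReal :=
    hp₀ ▸ ENNReal.HolderConjugate.toReal (p := ENNReal.ofReal p) (q := q) (hp₀.symm ▸ hp)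
  refine ⟨⟨fun ⟨T, hT, C, hC, hTC⟩ => ActsByMatrix.summable_norm_rpow hpq hT hTC hC,
    fun hs => ?_⟩,
    fun T hT ⟨C, hC, hTC⟩ => ActsByMatrix.pSummingNorm_eq hpq hT hTC hC⟩
  obtain ⟨T, hT⟩ := exists_actsByMatrix (q := q) hs
  exact ⟨T, hT, _, by positivity, hT.isPSummingWith hs⟩
end

section
/- Let p, q, r, s ∈ [1,∞] with r ≤ p and s ≤ q, and let λ = {λ_j}, μ = {μ_k} be sequences of real numbers. For n ∈ ℕ, define the triangular truncation associated to λ and μ by T^{λ,μ}_{Δ,n}(S) = Σ_{j,k ≤ n, μ_k ≤ λ_j} Q_k S P_j. Then ‖T^{λ,μ}_{Δ,n}‖ from L(ℓ_p, ℓ_q) to L(ℓ_r, ℓ_s) is at most ‖T_{Δ,n}‖, where T_{Δ,n} is the standard triangular truncation T_{Δ,n}(S) = Σ_{1≤k≤j≤n} Q_k S P_j. -/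
open scoped ENNReal

/-- The operator norm of an `n×n` matrix viewed as an operator from `ℓ_p^n` to `ℓ_q^n`. -/
noncomputable def lpqOpNorm (p q : ℝ≥0∞) [Fact (1 ≤ p)] [Fact (1 ≤ q)] {n : ℕ}
    (A : Matrix (Fin n) (Fin n) ℂ) : ℝ :=
  ‖LinearMap.toContinuousLinearMap
    (((WithLp.linearEquiv q ℂ (∀ _ : Fin n, ℂ)).symm.toLinearMap.comp
      A.mulVecLin).comp
      (WithLp.linearEquiv p ℂ (∀ _ : Fin n, ℂ)).toLinearMap)‖

/-!
Sort the rows so that `μ` increases. The rows kept in column `j` then form an initial segment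
of length `c j = #{k | μ k ≤ λ j}`, so up to a row permutation `T^{λ,μ}(S)` keeps the entries
`(k, j)` with `k < c j`. For a fixed vector `x`, columns with the same `c j = b + 1` are merged:
the block `x_b` of `x` on them is replaced by the scalar `u b = ‖x_b‖_r`, and the normalised
blocks `x_b / u b` become the columns of a matrix `X`. These columns are disjointly supported
and, since `r ≤ p`, have `ℓ_p`-norm at most their `ℓ_r`-norm `1`; so `X` is a contraction of
`ℓ_p`, while `‖u‖_r ≤ ‖x‖_r`. Then `T^{λ,μ}(S) x` is, up to the row permutation, `T_Δ(S X) u`.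
-/

open scoped NNReal
open WithLp Finset Matrix

theorem NNReal.sum_rpow_le_rpow_sum {ι : Type*} (s : Finset ι) (f : ι → ℝ≥0) {t : ℝ}
    (ht : 1 ≤ t) : ∑ i ∈ s, f i ^ t ≤ (∑ i ∈ s, f i) ^ t := by
  induction s using Finset.cons_induction with
  | empty => simp
  | cons a s _ ih =>
    rw [sum_cons, sum_cons]
    exact (add_le_add_right ih _).trans (NNReal.add_rpow_le_rpow_add _ _ ht)

theorem PiLp.norm_toLp_le_of_exponent_le {ι : Type*} [Fintype ι] {β : ι → Type*}
    [∀ i, SeminormedAddCommGroup (β i)] {p r : ℝ≥0∞} [Fact (1 ≤ p)] [Fact (1 ≤ r)]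
    (hrp : r ≤ p) (x : ∀ i, β i) : ‖toLp p x‖ ≤ ‖toLp r x‖ := by
  rcases eq_or_ne p ∞ with rfl | hp
  · rw [PiLp.norm_toLp]
    exact pi_norm_le_iff_of_nonneg (norm_nonneg _) |>.mpr fun i => PiLp.norm_apply_le _ i
  have hr : r ≠ ∞ := ne_top_of_le_ne_top hp hrp
  have hr0 : 0 < r.toReal := ENNReal.toReal_pos (zero_lt_one.trans_le Fact.out).ne' hr
  have hrp' : r.toReal ≤ p.toReal := ENNReal.toReal_mono hp hrp
  rw [← coe_nnnorm, ← coe_nnnorm, NNReal.coe_le_coe, PiLp.nnnorm_eq_sum hp,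
    PiLp.nnnorm_eq_sum hr]
  calc (∑ i, ‖x i‖₊ ^ p.toReal) ^ (1 / p.toReal)
      = (∑ i, (‖x i‖₊ ^ r.toReal) ^ (p.toReal / r.toReal)) ^ (1 / p.toReal) := by
        simp_rw [← NNReal.rpow_mul, mul_div_cancel₀ _ hr0.ne']
    _ ≤ ((∑ i, ‖x i‖₊ ^ r.toReal) ^ (p.toReal / r.toReal)) ^ (1 / p.toReal) := by
        gcongr
        exact NNReal.sum_rpow_le_rpow_sum _ _ ((one_le_div hr0).mpr hrp')
    _ = (∑ i, ‖x i‖₊ ^ r.toReal) ^ (1 / r.toReal) := by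
        have hp0 : 0 < p.toReal := hr0.trans_le hrp'
        rw [← NNReal.rpow_mul]
        congr 1
        field_simp

section Fiberwise

variable {ι : Type*} [Fintype ι] {p : ℝ≥0∞} [Fact (1 ≤ p)]

theorem PiLp.norm_toLp_le_of_forall_norm_le {β γ : ι → Type*}
    [∀ i, NormedAddCommGroup (β i)] [∀ i, NormedAddCommGroup (γ i)] {x : ∀ i, β i}
    {y : ∀ i, γ i} (h : ∀ i, ‖x i‖ ≤ ‖y i‖) : ‖toLp p x‖ ≤ ‖toLp p y‖ := by
  have hx := equiv_lpPiLp_norm (Equiv.lpPiLp.symm (toLp p x))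
  have hy := equiv_lpPiLp_norm (Equiv.lpPiLp.symm (toLp p y))
  rw [Equiv.apply_symm_apply] at hx hy
  rw [hx, hy]
  exact lp.norm_mono (zero_lt_one.trans_le Fact.out).ne' h

theorem PiLp.norm_toLp_eq_of_forall_norm_eq {β γ : ι → Type*}
    [∀ i, NormedAddCommGroup (β i)] [∀ i, NormedAddCommGroup (γ i)] {x : ∀ i, β i}
    {y : ∀ i, γ i} (h : ∀ i, ‖x i‖ = ‖y i‖) : ‖toLp p x‖ = ‖toLp p y‖ :=
  (norm_toLp_le_of_forall_norm_le fun i => (h i).le).antisymm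
    (norm_toLp_le_of_forall_norm_le fun i => (h i).ge)

theorem PiLp.norm_toLp_eq_norm_toLp_norm_fiber {κ : Type*} [Fintype κ] [DecidableEq κ]
    {E : Type*} [NormedAddCommGroup E] (g : ι → κ) (x : ι → E) :
    ‖toLp p x‖ = ‖toLp p fun b => ‖toLp p fun j : {j // g j = b} => x j‖‖ := by
  rw [← (LinearIsometryEquiv.piLpCongrLeft p ℕ E (Equiv.sigmaFiberEquiv g).symm).norm_map,
    ← (LinearIsometryEquiv.piLpCurry ℕ p fun b (_ : {j // g j = b}) => E).norm_map]
  exact norm_toLp_eq_of_forall_norm_eq fun b => (norm_norm _).symm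

theorem exists_contraction_factorization_fiberwise {κ 𝕜 : Type*} [Fintype κ]
    [DecidableEq κ] [RCLike 𝕜] {r : ℝ≥0∞} [Fact (1 ≤ r)] (hrp : r ≤ p) (g : ι → κ)
    (x : ι → 𝕜) :
    ∃ (X : Matrix ι κ 𝕜) (u : κ → 𝕜),
      (∀ j b, X j b * u b = if g j = b then x j else 0) ∧ ‖toLp r u‖ = ‖toLp r x‖ ∧
        ∀ w, ‖toLp p (X *ᵥ w)‖ ≤ ‖toLp p w‖ := by
  set N : κ → ℝ := fun b => ‖toLp r fun j : {j // g j = b} => x j‖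
  have hxN : ∀ j, ‖x j‖ ≤ N (g j) := fun j =>
    PiLp.norm_apply_le (toLp r fun j' : {j' // g j' = g j} => x j') ⟨j, rfl⟩
  set X : Matrix ι κ 𝕜 := of fun j b => if g j = b then x j / N b else 0
  refine ⟨X, fun b => N b, ?factor, ?norm_u, ?contraction⟩
  case factor =>
    intro j b
    simp only [X, of_apply]
    split_ifs with h
    · subst h
      rcases eq_or_ne (N (g j)) 0 with h0 | h0
      · simp [norm_le_zero_iff.mp (h0 ▸ hxN j)]
      · exact div_mul_cancel₀ _ (RCLike.ofReal_ne_zero.mpr h0)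
    · exact zero_mul _
  case norm_u =>
    rw [PiLp.norm_toLp_eq_norm_toLp_norm_fiber g x]
    exact PiLp.norm_toLp_eq_of_forall_norm_eq fun b => by simp [N]
  case contraction =>
    intro w
    rw [PiLp.norm_toLp_eq_norm_toLp_norm_fiber g]
    refine PiLp.norm_toLp_le_of_forall_norm_le fun b => ?_
    have hcol : (fun j : {j // g j = b} => (X *ᵥ w) j) =
        (w b / N b) • fun j : {j // g j = b} => x j := by
      ext ⟨j, rfl⟩
      simp only [X, mulVec, dotProduct, of_apply, ite_mul, zero_mul, sum_ite_eq, mem_univ,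
        if_true, Pi.smul_apply, smul_eq_mul]
      ring
    have hN : ‖toLp p fun j : {j // g j = b} => x j‖ ≤ N b :=
      PiLp.norm_toLp_le_of_exponent_le hrp _
    rw [hcol, norm_norm, toLp_smul, norm_smul, norm_div, RCLike.norm_ofReal,
      abs_of_nonneg (norm_nonneg _)]
    calc ‖w b‖ / N b * _ ≤ ‖w b‖ / N b * N b := by gcongr
      _ ≤ ‖w b‖ := by
        rcases eq_or_ne (N b) 0 with h0 | h0
        · simp [h0]
        · rw [div_mul_cancel₀ _ h0]

end Fiberwise

section lpqOpNorm

variable {p q : ℝ≥0∞} [Fact (1 ≤ p)] [Fact (1 ≤ q)] {n : ℕ}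

theorem lpqOpNorm_nonneg (A : Matrix (Fin n) (Fin n) ℂ) : 0 ≤ lpqOpNorm p q A :=
  norm_nonneg _

theorem norm_toLp_mulVec_le_lpqOpNorm (A : Matrix (Fin n) (Fin n) ℂ) (x : Fin n → ℂ) :
    ‖toLp q (A *ᵥ x)‖ ≤ lpqOpNorm p q A * ‖toLp p x‖ :=
  (LinearMap.toContinuousLinearMap
    (((WithLp.linearEquiv q ℂ (Fin n → ℂ)).symm.toLinearMap.comp A.mulVecLin).comp
      (WithLp.linearEquiv p ℂ (Fin n → ℂ)).toLinearMap)).le_opNorm (toLp p x)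

theorem lpqOpNorm_le_of_forall {A : Matrix (Fin n) (Fin n) ℂ} {c : ℝ} (hc : 0 ≤ c)
    (h : ∀ x, ‖toLp q (A *ᵥ x)‖ ≤ c * ‖toLp p x‖) : lpqOpNorm p q A ≤ c :=
  ContinuousLinearMap.opNorm_le_bound _ hc fun x => h (ofLp x)

theorem lpqOpNorm_submatrix_le (A : Matrix (Fin n) (Fin n) ℂ) (e : Fin n ≃ Fin n) :
    lpqOpNorm p q (A.submatrix e id) ≤ lpqOpNorm p q A := by
  refine lpqOpNorm_le_of_forall (lpqOpNorm_nonneg A) fun x => ?_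
  have hperm : ‖toLp q (A.submatrix e id *ᵥ x)‖ = ‖toLp q (A *ᵥ x)‖ :=
    (LinearIsometryEquiv.piLpCongrLeft q ℂ ℂ e.symm).norm_map (toLp q (A *ᵥ x))
  exact hperm ▸ norm_toLp_mulVec_le_lpqOpNorm A x

theorem lpqOpNorm_mul_le_of_contraction (A X : Matrix (Fin n) (Fin n) ℂ)
    (hX : ∀ w, ‖toLp p (X *ᵥ w)‖ ≤ ‖toLp p w‖) :
    lpqOpNorm p q (A * X) ≤ lpqOpNorm p q A := by
  refine lpqOpNorm_le_of_forall (lpqOpNorm_nonneg A) fun w => ?_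
  rw [← mulVec_mulVec]
  exact (norm_toLp_mulVec_le_lpqOpNorm A _).trans
    (by gcongr; exacts [lpqOpNorm_nonneg A, hX w])

end lpqOpNorm

theorem Monotone.le_iff_lt_card_filter {α : Type*} [LinearOrder α] {n : ℕ} {f : Fin n → α}
    (hf : Monotone f) (t : α) (a : Fin n) : f a ≤ t ↔ (a : ℕ) < #{a' | f a' ≤ t} := by
  constructor
  · intro h
    have hsub : Iic a ⊆ ({a' | f a' ≤ t} : Finset (Fin n)) := fun a' ha' =>
      mem_filter.2 ⟨mem_univ _, (hf (mem_Iic.1 ha')).trans h⟩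
    have := card_le_card hsub
    rw [Fin.card_Iic] at this
    omega
  · intro h
    by_contra h'
    have hsub : ({a' | f a' ≤ t} : Finset (Fin n)) ⊆ Iio a := fun a' ha' =>
      mem_Iio.2 (lt_of_not_ge fun hle => h' ((hf hle).trans (mem_filter.1 ha').2))
    have := card_le_card hsub
    rw [Fin.card_Iio] at this
    omega

namespace Matrix

variable {n : ℕ} {α : Type*} [Zero α]

def triangularTrunc (S : Matrix (Fin n) (Fin n) α) : Matrix (Fin n) (Fin n) α :=
  of fun k j => if (k : ℕ) ≤ (j : ℕ) then S k j else 0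

def thresholdTrunc (c : Fin n → ℕ) (S : Matrix (Fin n) (Fin n) α) :
    Matrix (Fin n) (Fin n) α :=
  of fun k j => if (k : ℕ) < c j then S k j else 0

theorem thresholdTrunc_mulVec_eq {R : Type*} [Semiring R] {c : Fin n → ℕ}
    {S X : Matrix (Fin n) (Fin n) R} {x u : Fin n → R}
    (hcol : ∀ k j : Fin n, ∑ b : Fin n, (if (k : ℕ) ≤ (b : ℕ) then X j b * u b else 0) =
      if (k : ℕ) < c j then x j else 0) :
    S.thresholdTrunc c *ᵥ x = (S * X).triangularTrunc *ᵥ u := by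
  ext k
  calc _ = ∑ j : Fin n,
        S k j * ∑ b : Fin n, (if (k : ℕ) ≤ (b : ℕ) then X j b * u b else 0) := by
        simp only [hcol, thresholdTrunc, mulVec, dotProduct, of_apply, mul_ite, ite_mul,
          zero_mul, mul_zero]
    _ = _ := by
        simp only [triangularTrunc, mulVec, dotProduct, of_apply, mul_apply, mul_sum, ite_mul,
          zero_mul, mul_ite, sum_mul, mul_zero, mul_assoc]
        rw [sum_comm]
        exact sum_congr rfl fun b _ => by split_ifs <;> simp

end Matrix

theorem lpqOpNorm_thresholdTrunc_le {p q r s : ℝ≥0∞} [Fact (1 ≤ p)] [Fact (1 ≤ q)]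
    [Fact (1 ≤ r)] [Fact (1 ≤ s)] (hrp : r ≤ p) {n : ℕ} {C : ℝ} (hC : 0 ≤ C)
    (hTri : ∀ S : Matrix (Fin n) (Fin n) ℂ,
      lpqOpNorm r s S.triangularTrunc ≤ C * lpqOpNorm p q S)
    (c : Fin n → ℕ) (hc : ∀ j, c j ≤ n) (S : Matrix (Fin n) (Fin n) ℂ) :
    lpqOpNorm r s (S.thresholdTrunc c) ≤ C * lpqOpNorm p q S := by
  refine lpqOpNorm_le_of_forall (mul_nonneg hC (lpqOpNorm_nonneg S)) fun x => ?_
  -- Columns with `c j = 0` are zero, so `x` may vanish there; the rest are grouped by `c j - 1`.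
  set x' : Fin n → ℂ := fun j => if c j = 0 then 0 else x j
  set g : Fin n → Fin n := fun j => ⟨c j - 1, by have := hc j; have := j.isLt; omega⟩
  obtain ⟨X, u, hXu, hu, hX⟩ := exists_contraction_factorization_fiberwise hrp g x'
  have hMx : S.thresholdTrunc c *ᵥ x = (S * X).triangularTrunc *ᵥ u := by
    refine thresholdTrunc_mulVec_eq fun k j => ?_
    simp only [hXu]
    rw [Fintype.sum_eq_single (g j) fun b hb => by simp [Ne.symm hb]]
    simp only [g, x', if_true]
    split_ifs <;> simp_all <;> omega
  have hx' : ‖toLp r x'‖ ≤ ‖toLp r x‖ :=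
    PiLp.norm_toLp_le_of_forall_norm_le fun j => by simp only [x']; split_ifs <;> simp
  have hSX := lpqOpNorm_mul_le_of_contraction (q := q) S X hX
  have := mul_nonneg hC (lpqOpNorm_nonneg (p := p) (q := q) S)
  calc ‖toLp s (S.thresholdTrunc c *ᵥ x)‖
      ≤ lpqOpNorm r s (S * X).triangularTrunc * ‖toLp r u‖ :=
        hMx ▸ norm_toLp_mulVec_le_lpqOpNorm _ u
    _ ≤ C * lpqOpNorm p q (S * X) * ‖toLp r x'‖ := by rw [hu]; gcongr; exact hTri _
    _ ≤ C * lpqOpNorm p q S * ‖toLp r x‖ := by gcongr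

theorem stmt_17_general (p q r s : ℝ≥0∞) [Fact (1 ≤ p)] [Fact (1 ≤ q)] [Fact (1 ≤ r)]
    [Fact (1 ≤ s)] (hrp : r ≤ p)
    (lam mu : ℕ → ℝ) (n : ℕ) (C : ℝ) (hC : 0 ≤ C)
    (hTri : ∀ S : Matrix (Fin n) (Fin n) ℂ,
      lpqOpNorm r s (Matrix.of fun k j : Fin n => if (k : ℕ) ≤ (j : ℕ) then S k j else 0) ≤
        C * lpqOpNorm p q S) :
    ∀ S : Matrix (Fin n) (Fin n) ℂ,
      lpqOpNorm r s
          (Matrix.of fun k j : Fin n => if mu (k : ℕ) ≤ lam (j : ℕ) then S k j else 0) ≤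
        C * lpqOpNorm p q S := by
  intro S
  obtain ⟨σ, hσ⟩ : ∃ σ : Equiv.Perm (Fin n), Monotone fun a => mu (σ a) :=
    ⟨_, Tuple.monotone_sort fun k : Fin n => mu k⟩
  set c : Fin n → ℕ := fun j => #{a | mu (σ a) ≤ lam j}
  have hc : ∀ j, c j ≤ n := fun j => (card_filter_le _ _).trans_eq (card_fin n)
  have hsorted : ∀ k j : Fin n, mu k ≤ lam j ↔ (σ.symm k : ℕ) < c j := fun k j => by
    simpa using hσ.le_iff_lt_card_filter (lam j) (σ.symm k)
  have hM : (of fun k j : Fin n => if mu (k : ℕ) ≤ lam (j : ℕ) then S k j else 0) =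
      ((S.submatrix σ id).thresholdTrunc c).submatrix σ.symm id := by
    ext k j
    simp [thresholdTrunc, hsorted]
  calc _ = lpqOpNorm r s (((S.submatrix σ id).thresholdTrunc c).submatrix σ.symm id) := by
        rw [hM]
    _ ≤ lpqOpNorm r s ((S.submatrix σ id).thresholdTrunc c) := lpqOpNorm_submatrix_le _ _
    _ ≤ C * lpqOpNorm p q (S.submatrix σ id) := lpqOpNorm_thresholdTrunc_le hrp hC hTri c hc _
    _ ≤ C * lpqOpNorm p q S := by gcongr; exact lpqOpNorm_submatrix_le S σ

/-- Let `p, q, r, s ∈ [1,∞]` with `r ≤ p` and `s ≤ q`, and let `λ`, `μ` be sequences of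
real numbers.  If `C` bounds the standard triangular truncation `T_{Δ,n}`
(keeping entries `(k,j)` with `k ≤ j`) from `L(ℓ_p,ℓ_q)` to `L(ℓ_r,ℓ_s)`, then `C` also
bounds the triangular truncation `T^{λ,μ}_{Δ,n}` associated to `λ` and `μ` (keeping
entries `(k,j)` with `μ_k ≤ λ_j`); that is,
`‖T^{λ,μ}_{Δ,n}‖_{L(ℓ_p,ℓ_q) → L(ℓ_r,ℓ_s)} ≤ ‖T_{Δ,n}‖_{L(ℓ_p,ℓ_q) → L(ℓ_r,ℓ_s)}`. -/
theorem stmt_17 (p q r s : ℝ≥0∞) [Fact (1 ≤ p)] [Fact (1 ≤ q)] [Fact (1 ≤ r)]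
    [Fact (1 ≤ s)] (hrp : r ≤ p) (hsq : s ≤ q)
    (lam mu : ℕ → ℝ) (n : ℕ) (C : ℝ) (hC : 0 ≤ C)
    (hTri : ∀ S : Matrix (Fin n) (Fin n) ℂ,
      lpqOpNorm r s (Matrix.of fun k j : Fin n => if (k : ℕ) ≤ (j : ℕ) then S k j else 0) ≤
        C * lpqOpNorm p q S) :
    ∀ S : Matrix (Fin n) (Fin n) ℂ,
      lpqOpNorm r s
          (Matrix.of fun k j : Fin n => if mu (k : ℕ) ≤ lam (j : ℕ) then S k j else 0) ≤
        C * lpqOpNorm p q S :=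
  stmt_17_general p q r s hrp lam mu n C hC hTri
end
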